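/- arXiv:1702.05574 — 7 statements merged into one kernel-verified Lean document; each statement's English description precedes it below -/
import Mathlib

section
/- For f holomorphic on the unit disk with Taylor coefficients aₙ, the A-norm satisfies ∑ₙ |aₙ| ≤ sup_{z∈D}|f(z)| + 2·sup_{z∈D}|f'(z)| (Newman's inequality). -/
open Complex MeasureTheory Finset Filter Set
open scoped Real Topology


open Metric


lemma ortho (m : ℤ) :
    ∫ θ in Ioc (0:ℝ) (2*Real.pi), Complex.exp (m * θ * I) =
      if m = 0 then (2*Real.pi : ℂ) else 0 := by
  rw [← intervalIntegral.integral_of_le (by positivity)]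
  split_ifs with hm
  · subst hm
    simp [Real.pi_pos.le]
  · have hc : (m : ℂ) * I ≠ 0 := by
      simp [Complex.ext_iff, hm]
    have : ∀ θ : ℝ, Complex.exp ((m:ℂ) * θ * I) = Complex.exp ((m * I) * θ) := by
      intro θ; ring_nf
    simp_rw [this]
    rw [integral_exp_mul_complex hc]
    have h1 : ((m:ℂ) * I) * (2*Real.pi : ℝ) = (m:ℂ) * (2 * (Real.pi:ℂ) * I) := by
      push_cast; ring
    rw [h1, Complex.exp_int_mul_two_pi_mul_I]
    simp

lemma coeff_formula (g : ℂ → ℂ) (b : ℕ → ℂ) (r : ℝ) (hr0 : 0 < r)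
    (hsum : ∀ θ : ℝ, HasSum (fun k => b k * (r * Complex.exp (θ*I))^k)
      (g (r * Complex.exp (θ*I))))
    (hnorm : Summable (fun k => ‖b k‖ * r^k)) (n : ℕ) :
    ∫ θ in Ioc (0:ℝ) (2*Real.pi),
        Complex.exp (-(n:ℂ) * θ * I) * g (r * Complex.exp (θ*I))
      = 2*Real.pi * (b n * r^n) := by
  set μ := volume.restrict (Ioc (0:ℝ) (2*Real.pi)) with hμ
  set F : ℕ → ℝ → ℂ := fun k θ =>
    Complex.exp (-(n:ℂ) * θ * I) * (b k * (r * Complex.exp (θ*I))^k) with hF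
  have hnormF : ∀ k θ, ‖F k θ‖ = ‖b k‖ * r^k := by
    intro k θ
    simp only [hF, norm_mul, norm_pow, Complex.norm_exp]
    simp [abs_of_pos hr0, mul_pow]
  have hFcont : ∀ k, Continuous (F k) := by
    intro k; fun_prop
  have hFint : ∀ k, Integrable (F k) μ := fun k =>
    ((hFcont k).integrableOn_Ioc).integrable
  have hμfin : μ univ = ENNReal.ofReal (2*Real.pi) := by
    simp [hμ, Real.volume_Ioc]
  have hintnorm : ∀ k, ∫ θ, ‖F k θ‖ ∂μ = (2*Real.pi) * (‖b k‖ * r^k) := by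
    intro k
    simp_rw [hnormF k]
    rw [integral_const, hμ]
    simp [Real.volume_Ioc, Real.pi_pos.le, smul_eq_mul,
      ENNReal.toReal_ofReal (by positivity : (0:ℝ) ≤ 2*Real.pi)]
  have hsummable : Summable (fun k => ∫ θ, ‖F k θ‖ ∂μ) := by
    simp_rw [hintnorm]
    exact hnorm.mul_left _
  have hhs := MeasureTheory.hasSum_integral_of_summable_integral_norm hFint hsummable
  have htsum : ∀ θ : ℝ, ∑' k, F k θ
      = Complex.exp (-(n:ℂ) * θ * I) * g (r * Complex.exp (θ*I)) := by
    intro θ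
    exact ((hsum θ).mul_left _).tsum_eq
  have hFk : ∀ k, ∫ θ, F k θ ∂μ = if k = n then 2*Real.pi * (b n * r^n) else 0 := by
    intro k
    have key : ∀ θ : ℝ, F k θ
        = (b k * r^k) * Complex.exp (((k:ℤ) - n : ℤ) * θ * I) := by
      intro θ
      simp only [hF]
      rw [mul_pow, ← Complex.exp_nat_mul]
      rw [show -(n:ℂ) * θ * I = -(n * (θ * I)) by ring, Complex.exp_neg]
      rw [show ((((k:ℤ) - n : ℤ) : ℂ) * θ * I) = (k * (θ*I)) - (n * (θ*I)) by push_cast; ring,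
        Complex.exp_sub]
      field_simp
    simp_rw [key]
    rw [MeasureTheory.integral_const_mul, hμ, ortho]
    split_ifs with h1 h2 h2
    · subst h2; push_cast; ring
    · exfalso; apply h2; omega
    · exfalso; apply h1; omega
    · ring
  have h2 : HasSum (fun k => ∫ θ, F k θ ∂μ) (2*Real.pi * (b n * r^n)) := by
    simp_rw [hFk]
    exact hasSum_ite_eq n _
  have := hhs.unique h2
  rw [← this]
  exact (integral_congr_ae (Filter.Eventually.of_forall htsum)).symm

lemma bessel_r (g : ℂ → ℂ) (hg : DifferentiableOn ℂ g (ball 0 1)) (C : ℝ)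
    (hC : ∀ z ∈ ball (0:ℂ) 1, ‖g z‖ ≤ C) {r : ℝ} (hr0 : 0 < r) (hr1 : r < 1) (N : ℕ) :
    ∑ n ∈ Finset.range N, ‖iteratedDeriv n g 0 / (n.factorial : ℂ)‖^2 * r^(2*n) ≤ C^2 := by
  set b : ℕ → ℂ := fun n => iteratedDeriv n g 0 / (n.factorial : ℂ) with hb
  -- power series on ball of radius s, r < s < 1
  set s : ℝ := (1+r)/2 with hs
  have hrs : r < s := by rw [hs]; linarith
  have hs1 : s < 1 := by rw [hs]; linarith
  have hs0 : 0 < s := by positivity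
  set s' : NNReal := ⟨s, hs0.le⟩ with hs'
  have hsub : closedBall (0:ℂ) s' ⊆ ball (0:ℂ) 1 := by
    apply closedBall_subset_ball
    exact_mod_cast hs1
  have hp : HasFPowerSeriesOnBall g (cauchyPowerSeries g 0 s') 0 s' :=
    (hg.mono hsub).hasFPowerSeriesOnBall (by exact_mod_cast hs0)
  set p := cauchyPowerSeries g 0 s' with hpdef
  have hcoeff : ∀ n, p.coeff n = b n := by
    intro n
    have h1 := hp.factorial_smul (1:ℂ) n
    have h2 : ((n.factorial : ℂ)) * p.coeff n = iteratedDeriv n g 0 := by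
      rw [iteratedDeriv_eq_iteratedFDeriv, ← h1, nsmul_eq_mul]
      rfl
    rw [hb]
    field_simp [← h2, Nat.factorial_ne_zero]
    rw [mul_comm]; exact h2
  have hsum : ∀ θ : ℝ, HasSum (fun k => b k * (r * Complex.exp (θ*I))^k)
      (g (r * Complex.exp (θ*I))) := by
    intro θ
    have hz : ‖(r * Complex.exp (θ*I) : ℂ)‖ = r := by
      simp [norm_mul, Complex.norm_exp, abs_of_pos hr0]
    have hmem : (r * Complex.exp (θ*I) : ℂ) ∈ Metric.eball (0:ℂ) s' := by
      rw [Metric.mem_eball, edist_zero_right, ← ofReal_norm, hz,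
        show (s' : ENNReal) = ENNReal.ofReal s from by
          rw [ENNReal.ofReal, Real.toNNReal_of_nonneg hs0.le]; rfl]
      exact (ENNReal.ofReal_lt_ofReal_iff_of_nonneg hr0.le).mpr hrs
    have := hp.hasSum hmem
    rw [zero_add] at this
    have e : (fun k => b k * (r * Complex.exp (θ*I))^k)
        = fun k => p k fun _ => (r * Complex.exp (θ*I) : ℂ) := by
      funext k
      rw [FormalMultilinearSeries.apply_eq_pow_smul_coeff, hcoeff, smul_eq_mul]
      ring
    rw [e]; exact this
  have hnorm : Summable (fun k => ‖b k‖ * r^k) := by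
    have hrad : (r.toNNReal : ENNReal) < p.radius := by
      refine lt_of_lt_of_le ?_ hp.r_le
      rw [ENNReal.coe_lt_coe, ← NNReal.coe_lt_coe]
      rw [Real.coe_toNNReal r hr0.le]; exact hrs
    have := p.summable_norm_mul_pow hrad
    convert this using 2 with k
    rw [p.norm_apply_eq_norm_coef, hcoeff]
    simp [Real.coe_toNNReal r hr0.le]
  -- notation
  set gr : ℝ → ℂ := fun θ => g (r * Complex.exp (θ*I)) with hgr
  have hmemball : ∀ θ : ℝ, (r * Complex.exp (θ*I) : ℂ) ∈ ball (0:ℂ) 1 := by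
    intro θ
    rw [mem_ball_zero_iff]
    simp only [norm_mul, Complex.norm_exp, Complex.norm_real]
    simp [abs_of_pos hr0, hr1]
  have hgrc : Continuous gr := by
    apply hg.continuousOn.comp_continuous (by fun_prop) hmemball
  set c : ℕ → ℂ := fun n => b n * r^n with hc
  have hint : ∀ n : ℕ, ∫ θ in Ioc (0:ℝ) (2*Real.pi),
      Complex.exp (-(n:ℂ) * θ * I) * gr θ = 2*Real.pi * c n :=
    fun n => coeff_formula g b r hr0 hsum hnorm n
  set S : ℝ → ℂ := fun θ => ∑ n ∈ Finset.range N, c n * Complex.exp (n * θ * I) with hS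
  have hScont : Continuous S := by
    apply continuous_finset_sum
    intro i _
    fun_prop
  have hconjS : ∀ θ : ℝ, (starRingEnd ℂ) (S θ)
      = ∑ n ∈ Finset.range N, (starRingEnd ℂ) (c n) * Complex.exp (-(n:ℂ) * θ * I) := by
    intro θ
    rw [hS, map_sum]
    congr 1; ext n
    rw [map_mul, ← Complex.exp_conj]
    congr 2
    simp [Complex.ext_iff]
  set μ := volume.restrict (Ioc (0:ℝ) (2*Real.pi)) with hμ
  have hintC : ∀ {h : ℝ → ℂ}, Continuous h → Integrable h μ := fun hh =>
    (hh.integrableOn_Ioc).integrable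
  have hintR : ∀ {h : ℝ → ℝ}, Continuous h → Integrable h μ := fun hh =>
    (hh.integrableOn_Ioc).integrable
  -- I1
  have I1 : ∫ θ, (starRingEnd ℂ) (S θ) * gr θ ∂μ
      = ∑ n ∈ Finset.range N, (starRingEnd ℂ) (c n) * (2*Real.pi * c n) := by
    have heq : ∀ θ : ℝ, (starRingEnd ℂ) (S θ) * gr θ
        = ∑ n ∈ Finset.range N,
            (starRingEnd ℂ) (c n) * (Complex.exp (-(n:ℂ) * θ * I) * gr θ) := by
      intro θ
      rw [hconjS, Finset.sum_mul]
      congr 1; ext n; ring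
    simp_rw [heq]
    rw [MeasureTheory.integral_finset_sum]
    · congr 1; ext n
      rw [MeasureTheory.integral_const_mul, hint n]
    · intro n _
      exact hintC (by fun_prop)
  -- I2
  have I2 : ∫ θ, (starRingEnd ℂ) (S θ) * S θ ∂μ
      = ∑ n ∈ Finset.range N, (starRingEnd ℂ) (c n) * (2*Real.pi * c n) := by
    have heq : ∀ θ : ℝ, (starRingEnd ℂ) (S θ) * S θ
        = ∑ n ∈ Finset.range N, ∑ m ∈ Finset.range N,
            ((starRingEnd ℂ) (c n) * c m) * Complex.exp ((((m:ℤ) - n : ℤ) : ℂ) * θ * I) := by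
      intro θ
      rw [hconjS, hS, Finset.sum_mul_sum]
      congr 1; ext n; congr 1; ext m
      rw [show ((((m:ℤ) - n : ℤ) : ℂ) * θ * I) = (m * θ * I) + (-(n:ℂ) * θ * I) by
        push_cast; ring, Complex.exp_add]
      ring
    simp_rw [heq]
    rw [MeasureTheory.integral_finset_sum _ (fun n _ => hintC (by
      apply continuous_finset_sum; intro m _; fun_prop))]
    have : ∀ n ∈ Finset.range N, (∫ θ, (∑ m ∈ Finset.range N,
        ((starRingEnd ℂ) (c n) * c m) * Complex.exp ((((m:ℤ) - n : ℤ) : ℂ) * θ * I)) ∂μ)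
        = (starRingEnd ℂ) (c n) * (2*Real.pi * c n) := by
      intro n hn
      rw [MeasureTheory.integral_finset_sum _ (fun m _ => hintC (by fun_prop))]
      have : ∀ m ∈ Finset.range N, (∫ θ, ((starRingEnd ℂ) (c n) * c m)
          * Complex.exp ((((m:ℤ) - n : ℤ) : ℂ) * θ * I) ∂μ)
          = if m = n then (starRingEnd ℂ) (c n) * (2*Real.pi * c n) else 0 := by
        intro m _
        rw [MeasureTheory.integral_const_mul, hμ, ortho]
        split_ifs with h1 h2 h2
        · subst h2; ring
        · exfalso; apply h2; omega
        · exfalso; apply h1; omega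
        · ring
      rw [Finset.sum_congr rfl this, Finset.sum_ite_eq' (Finset.range N) n]
      simp [hn]
    rw [Finset.sum_congr rfl this]
  -- passing to real parts
  set T : ℝ := 2*Real.pi * ∑ n ∈ Finset.range N, ‖c n‖^2 with hT
  have hsum_eq : ∑ n ∈ Finset.range N, (starRingEnd ℂ) (c n) * (2*Real.pi * c n)
      = (T : ℂ) := by
    rw [hT]
    push_cast
    rw [Finset.mul_sum]
    congr 1; ext n
    rw [show (starRingEnd ℂ) (c n) * (2*Real.pi * c n)
        = 2*Real.pi * (c n * (starRingEnd ℂ) (c n)) by ring, Complex.mul_conj]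
    norm_cast
    rw [Complex.normSq_eq_norm_sq]
    push_cast; ring
  have hptS : ∀ z : ℂ, ‖z‖^2 = ((starRingEnd ℂ) z * z).re := by
    intro z
    rw [mul_comm, Complex.mul_conj, Complex.ofReal_re, Complex.normSq_eq_norm_sq]
  have hre : ∀ (h : ℝ → ℂ), Continuous h →
      ∫ θ, (h θ).re ∂μ = (∫ θ, h θ ∂μ).re := by
    intro h hh
    have := integral_re (μ := μ) (f := h) (hintC hh)
    simpa [RCLike.re_to_complex] using this
  have P2 : ∫ θ, ‖S θ‖^2 ∂μ = T := by
    simp_rw [hptS]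
    rw [hre (fun θ => (starRingEnd ℂ) (S θ) * S θ) ((Complex.continuous_conj.comp hScont).mul hScont), I2, hsum_eq, Complex.ofReal_re]
  have P1 : ∫ θ, ((starRingEnd ℂ) (S θ) * gr θ).re ∂μ = T := by
    rw [hre (fun θ => (starRingEnd ℂ) (S θ) * gr θ) ((Complex.continuous_conj.comp hScont).mul hgrc), I1, hsum_eq, Complex.ofReal_re]
  have hGbd : ∫ θ, ‖gr θ‖^2 ∂μ ≤ 2*Real.pi * C^2 := by
    have hle : ∀ θ ∈ Ioc (0:ℝ) (2*Real.pi), ‖gr θ‖^2 ≤ C^2 := by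
      intro θ _
      have h1 := hC _ (hmemball θ)
      have h2 : (0:ℝ) ≤ ‖gr θ‖ := norm_nonneg _
      nlinarith
    calc ∫ θ, ‖gr θ‖^2 ∂μ ≤ ∫ _θ, C^2 ∂μ := by
          apply MeasureTheory.integral_mono_of_nonneg
            (Filter.Eventually.of_forall fun θ => by positivity)
            (hintR continuous_const)
          exact (MeasureTheory.ae_restrict_iff' measurableSet_Ioc).mpr
            (Filter.Eventually.of_forall hle)
      _ = 2*Real.pi * C^2 := by
          rw [MeasureTheory.integral_const, hμ]
          simp [Real.volume_Ioc, Real.pi_pos.le, ENNReal.toReal_ofReal (by positivity : (0:ℝ) ≤ 2*Real.pi),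
            smul_eq_mul]
  have hpos : (0:ℝ) ≤ ∫ θ, ‖gr θ - S θ‖^2 ∂μ :=
    MeasureTheory.integral_nonneg fun θ => by positivity
  have hexpand : ∫ θ, ‖gr θ - S θ‖^2 ∂μ
      = (∫ θ, ‖gr θ‖^2 ∂μ) - T := by
    have hpt : ∀ θ : ℝ, ‖gr θ - S θ‖^2
        = ‖gr θ‖^2 + ‖S θ‖^2 - 2 * ((starRingEnd ℂ) (S θ) * gr θ).re := by
      intro θ
      have h0 := Complex.normSq_sub (gr θ) (S θ)
      have h1 : ∀ z : ℂ, ‖z‖^2 = Complex.normSq z := by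
        intro z; rw [Complex.normSq_eq_norm_sq]
      rw [h1, h1, h1, h0, mul_comm (gr θ)]
    simp_rw [hpt]
    rw [MeasureTheory.integral_sub (hintR (by fun_prop)) (hintR (by fun_prop)),
      MeasureTheory.integral_add (hintR (by fun_prop)) (hintR (by fun_prop)),
      MeasureTheory.integral_const_mul, P1, P2]
    ring
  -- conclude
  have hTle : T ≤ 2*Real.pi * C^2 := by
    rw [hexpand] at hpos
    linarith
  have hfinal : ∑ n ∈ Finset.range N, ‖c n‖^2 ≤ C^2 := by
    rw [hT] at hTle
    have hπ : (0:ℝ) < 2*Real.pi := by positivity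
    calc ∑ n ∈ Finset.range N, ‖c n‖^2
        = (2*Real.pi * ∑ n ∈ Finset.range N, ‖c n‖^2) / (2*Real.pi) := by
          field_simp
      _ ≤ (2*Real.pi * C^2) / (2*Real.pi) := by gcongr
      _ = C^2 := by field_simp
  refine le_trans (le_of_eq ?_) hfinal
  apply Finset.sum_congr rfl
  intro n _
  rw [hc]
  simp only [norm_mul, norm_pow, Complex.norm_real, Real.norm_eq_abs,
    abs_of_pos hr0, mul_pow, ← pow_mul]
  ring
lemma bessel (g : ℂ → ℂ) (hg : DifferentiableOn ℂ g (ball 0 1)) (C : ℝ)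
    (hC : ∀ z ∈ ball (0:ℂ) 1, ‖g z‖ ≤ C) (N : ℕ) :
    ∑ n ∈ Finset.range N, ‖iteratedDeriv n g 0 / (n.factorial : ℂ)‖^2 ≤ C^2 := by
  have hev : ∀ᶠ r in 𝓝[<] (1:ℝ),
      ∑ n ∈ Finset.range N, ‖iteratedDeriv n g 0 / (n.factorial : ℂ)‖^2 * r^(2*n) ≤ C^2 := by
    filter_upwards [Ioo_mem_nhdsLT_of_mem (show (1:ℝ) ∈ Ioc (0:ℝ) 1 by norm_num)] with r hr
    exact bessel_r g hg C hC hr.1 hr.2 N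
  have htend : Filter.Tendsto
      (fun r : ℝ => ∑ n ∈ Finset.range N,
        ‖iteratedDeriv n g 0 / (n.factorial : ℂ)‖^2 * r^(2*n)) (𝓝[<] (1:ℝ))
      (𝓝 (∑ n ∈ Finset.range N, ‖iteratedDeriv n g 0 / (n.factorial : ℂ)‖^2)) := by
    have hcont : Continuous (fun r : ℝ => ∑ n ∈ Finset.range N,
        ‖iteratedDeriv n g 0 / (n.factorial : ℂ)‖^2 * r^(2*n)) := by fun_prop
    have := hcont.tendsto 1
    simp only [one_pow, mul_one] at this
    exact this.mono_left nhdsWithin_le_nhds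
  exact le_of_tendsto htend hev

lemma sum_inv_sq_le (N : ℕ) :
    ∑ n ∈ Finset.range N, (1/((n:ℝ)+1))^2 ≤ 2 := by
  have key : ∀ K : ℕ, ∑ n ∈ Finset.range (K+1), (1/((n:ℝ)+1))^2 ≤ 2 - 1/((K:ℝ)+1) := by
    intro K
    induction K with
    | zero => norm_num
    | succ K ih =>
      rw [Finset.sum_range_succ]
      have h1 : (0:ℝ) < (K:ℝ)+1 := by positivity
      have h2 : (0:ℝ) < (K:ℝ)+2 := by positivity
      have h3 : (1/((K:ℝ)+1+1))^2 ≤ 1/((K:ℝ)+1) - 1/((K:ℝ)+2) := by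
        rw [div_sub_div _ _ (ne_of_gt h1) (ne_of_gt h2)]
        rw [div_pow, one_pow, div_le_div_iff₀ (by positivity) (by positivity)]
        nlinarith
      push_cast
      push_cast at ih
      have h5 : ((K:ℝ)+1+1) = ((K:ℝ)+2) := by ring
      rw [h5]
      rw [h5] at h3
      linarith
  cases N with
  | zero => norm_num
  | succ K =>
    have := key K
    have : (0:ℝ) < (K:ℝ)+1 := by positivity
    have h4 : (0:ℝ) ≤ 1/((K:ℝ)+1) := by positivity
    linarith [key K]


/-- Newman's inequality: for `f` holomorphic on the open unit disk with
Taylor coefficients `aₙ`, the A-norm satisfies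
`∑ₙ ‖aₙ‖ ≤ sup_D ‖f‖ + 2 sup_D ‖f'‖` (stated with arbitrary bounds `M`, `M'` on
`‖f‖` and `‖f'‖` over the disk). -/
theorem newman_inequality
    (f : ℂ → ℂ) (hf : DifferentiableOn ℂ f (ball (0 : ℂ) 1))
    (M M' : ℝ)
    (hM : ∀ z ∈ ball (0 : ℂ) 1, ‖f z‖ ≤ M)
    (hM' : ∀ z ∈ ball (0 : ℂ) 1, ‖deriv f z‖ ≤ M') :
    Summable (fun n => ‖iteratedDeriv n f 0 / (n.factorial : ℂ)‖) ∧
      ∑' n, ‖iteratedDeriv n f 0 / (n.factorial : ℂ)‖ ≤ M + 2 * M' := by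
  have h0mem : (0:ℂ) ∈ ball (0:ℂ) 1 := by simp
  have hM0 : 0 ≤ M := le_trans (norm_nonneg _) (hM 0 h0mem)
  have hM'0 : 0 ≤ M' := le_trans (norm_nonneg _) (hM' 0 h0mem)
  set A : ℕ → ℝ := fun n => ‖iteratedDeriv n f 0 / (n.factorial : ℂ)‖ with hA
  have hAnn : ∀ n, 0 ≤ A n := fun n => norm_nonneg _
  have hd' : DifferentiableOn ℂ (deriv f) (ball (0:ℂ) 1) :=
    ((hf.analyticOnNhd isOpen_ball).deriv).differentiableOn
  have hkey : ∀ N, ∑ n ∈ Finset.range N, (((n:ℝ)+1) * A (n+1))^2 ≤ M'^2 := by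
    intro N
    refine le_trans (le_of_eq ?_) (bessel (deriv f) hd' M' hM' N)
    apply Finset.sum_congr rfl
    intro n _
    have e2 : ‖iteratedDeriv n (deriv f) 0 / ((n.factorial : ℕ):ℂ)‖ = ((n:ℝ)+1) * A (n+1) := by
      rw [← iteratedDeriv_succ', hA]
      have e1 : (iteratedDeriv (n+1) f 0 / ((n.factorial : ℕ):ℂ))
          = ((n:ℂ)+1) * (iteratedDeriv (n+1) f 0 / (((n+1).factorial : ℕ):ℂ)) := by
        rw [Nat.factorial_succ]
        push_cast
        have hne : ((n.factorial : ℕ):ℂ) ≠ 0 := by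
          exact_mod_cast Nat.cast_ne_zero.mpr n.factorial_ne_zero
        have hne2 : ((n:ℂ)+1) ≠ 0 := Nat.cast_add_one_ne_zero n
        field_simp
      rw [e1, norm_mul]
      congr 1
      rw [show ((n:ℂ)+1) = (((n+1:ℕ)):ℂ) by push_cast; ring, Complex.norm_natCast]
      push_cast; ring
    rw [e2]
  have hCS : ∀ N, ∑ n ∈ Finset.range N, A (n+1) ≤ 2*M' := by
    intro N
    have h1 := Finset.sum_mul_sq_le_sq_mul_sq (Finset.range N)
      (fun n => 1/((n:ℝ)+1)) (fun n => ((n:ℝ)+1) * A (n+1))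
    have heq : ∀ n ∈ Finset.range N,
        (1/((n:ℝ)+1)) * (((n:ℝ)+1) * A (n+1)) = A (n+1) := by
      intro n _
      field_simp
    rw [Finset.sum_congr rfl heq] at h1
    have hvnn : (0:ℝ) ≤ ∑ n ∈ Finset.range N, (((n:ℝ)+1) * A (n+1))^2 :=
      Finset.sum_nonneg fun n _ => sq_nonneg _
    have h2 : (∑ n ∈ Finset.range N, A (n+1))^2 ≤ 2 * M'^2 := by
      refine le_trans h1 ?_
      calc (∑ n ∈ Finset.range N, (1/((n:ℝ)+1))^2) * ∑ n ∈ Finset.range N, (((n:ℝ)+1) * A (n+1))^2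
          ≤ 2 * ∑ n ∈ Finset.range N, (((n:ℝ)+1) * A (n+1))^2 :=
            mul_le_mul_of_nonneg_right (sum_inv_sq_le N) hvnn
        _ ≤ 2 * M'^2 := by linarith [hkey N]
    have hSnn : (0:ℝ) ≤ ∑ n ∈ Finset.range N, A (n+1) :=
      Finset.sum_nonneg fun n _ => hAnn (n+1)
    nlinarith
  have hA0 : A 0 ≤ M := by
    rw [hA]
    simp only [iteratedDeriv_zero, Nat.factorial_zero, Nat.cast_one, div_one]
    exact hM 0 h0mem
  have hpartial : ∀ N, ∑ n ∈ Finset.range N, A n ≤ M + 2*M' := by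
    intro N
    cases N with
    | zero => simp; linarith
    | succ K =>
      rw [Finset.sum_range_succ']
      linarith [hCS K, hA0]
  exact ⟨summable_of_sum_range_le hAnn hpartial, Real.tsum_le_of_sum_range_le hAnn hpartial⟩
end

section
/- Let f be holomorphic and bounded on the open unit disk D, with sup_{z∈D}|f(z)| ≤ 1. Then for any ε ∈ (1/2, 1), writing ε̄ = 1−ε, we have sup_{z ∈ D_{1/2}} |f(z)| ≤ (sup_{z ∈ D_{ε̄}} |f(z)|)^{ε̄/ε}, where D_τ = τ̄ + τD denotes the horodisk of parameter τ. -/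
open Metric

section HadamardAux

open Set Complex Filter Topology Complex.HadamardThreeLines

lemma cayley_mem_ball {u : ℂ} (hu : 0 < u.re) : (u - 1) / (u + 1) ∈ ball (0 : ℂ) 1 := by
  have h1 : u + 1 ≠ 0 := by
    intro h
    have := congrArg Complex.re h
    simp at this
    linarith
  have hns : Complex.normSq (u - 1) < Complex.normSq (u + 1) := by
    simp [Complex.normSq_apply, Complex.sub_re, Complex.sub_im, Complex.add_re, Complex.add_im]
    nlinarith
  have habs : ‖u - 1‖ < ‖u + 1‖ := by
    rw [Complex.norm_def, Complex.norm_def]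
    exact Real.sqrt_lt_sqrt (Complex.normSq_nonneg _) hns
  rw [mem_ball, dist_zero_right, norm_div]
  rw [div_lt_one (norm_pos_iff.mpr h1)]
  exact habs

lemma cayley_horodisk_iff {τ : ℝ} (hτ : 0 < τ) {u : ℂ} (hu : 0 < u.re) :
    dist ((u - 1) / (u + 1)) (((1 - τ : ℝ) : ℂ)) ≤ τ ↔ 1 - τ ≤ τ * u.re := by
  have h1 : u + 1 ≠ 0 := by
    intro h
    have := congrArg Complex.re h
    simp at this
    linarith
  have key : (u - 1) / (u + 1) - ((1 - τ : ℝ) : ℂ) = ((τ : ℂ) * u - (2 - τ)) / (u + 1) := by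
    field_simp
    push_cast
    ring
  rw [dist_eq, key, norm_div]
  rw [div_le_iff₀ (by simpa using (norm_pos_iff.mpr h1))]
  have hA : (‖(τ:ℂ) * u - (2 - τ)‖)^2 = Complex.normSq ((τ:ℂ) * u - (2 - τ)) :=
    Complex.sq_norm _
  have hB : (‖u + 1‖)^2 = Complex.normSq (u + 1) := Complex.sq_norm _
  have hAe : Complex.normSq ((τ:ℂ) * u - (2 - τ)) = (τ * u.re - (2 - τ))^2 + (τ * u.im)^2 := by
    simp [Complex.normSq_apply, Complex.sub_re, Complex.sub_im, Complex.mul_re, Complex.mul_im]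
    ring
  have hBe : Complex.normSq (u + 1) = (u.re + 1)^2 + u.im^2 := by
    simp [Complex.normSq_apply]
    ring
  constructor
  · intro h
    have h2 : Complex.normSq ((τ:ℂ) * u - (2 - τ)) ≤ τ^2 * Complex.normSq (u + 1) := by
      rw [← hA, ← hB]
      nlinarith [norm_nonneg ((τ:ℂ) * u - (2 - τ)), norm_nonneg (u + 1)]
    rw [hAe, hBe] at h2
    nlinarith
  · intro h
    have h2 : Complex.normSq ((τ:ℂ) * u - (2 - τ)) ≤ (τ * ‖u + 1‖)^2 := by
      rw [mul_pow, hB, hAe, hBe]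
      nlinarith
    calc ‖(τ:ℂ) * u - (2 - τ)‖
        = Real.sqrt (Complex.normSq ((τ:ℂ) * u - (2 - τ))) := Complex.norm_def _
      _ ≤ Real.sqrt ((τ * ‖u + 1‖)^2) := Real.sqrt_le_sqrt h2
      _ = τ * ‖u + 1‖ := Real.sqrt_sq (by positivity)

lemma hadamard_core
    (ε : ℝ) (hε : 1 / 2 < ε) (hε1 : ε < 1)
    (f : ℂ → ℂ) (hf : DifferentiableOn ℂ f (ball (0 : ℂ) 1))
    (hb : ∀ z ∈ ball (0 : ℂ) 1, ‖f z‖ ≤ 1)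
    (M : ℝ) (hM0 : 0 < M) (hM1 : M ≤ 1)
    (hM : ∀ z ∈ ball (0 : ℂ) 1, dist z ((ε : ℂ)) ≤ 1 - ε → ‖f z‖ ≤ M)
    (δ : ℝ) (hδ0 : 0 < δ) (hδ1 : δ < 1)
    (z : ℂ) (hz : z ∈ ball (0 : ℂ) 1) (hzd : dist z ((1 / 2 : ℂ)) ≤ 1 / 2) :
    ‖f z‖ ≤ M ^ ((1 - δ) / (ε / (1 - ε) - δ)) := by
  have h1e : (0:ℝ) < 1 - ε := by linarith
  set b : ℝ := ε / (1 - ε) with hbdef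
  have hb1 : (1:ℝ) < b := by
    rw [hbdef, lt_div_iff₀ h1e]; linarith
  have hbδ : 0 < b - δ := by linarith
  set L : ℂ → ℂ := fun w => (δ : ℂ) + ((b - δ : ℝ) : ℂ) * w with hLdef
  have hLre : ∀ w : ℂ, (L w).re = δ + (b - δ) * w.re := by
    intro w
    simp [hLdef, Complex.add_re, Complex.mul_re]
  have hLdiff : Differentiable ℂ L := by
    apply Differentiable.add (differentiable_const _)
    exact (differentiable_const _).mul differentiable_id
  set G : ℂ → ℂ := fun w => f ((L w - 1) / (L w + 1)) with hGdef
  set S : Set ℂ := {w : ℂ | 0 < (L w).re} with hSdef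
  have hSopen : IsOpen S := isOpen_lt continuous_const (Complex.continuous_re.comp hLdiff.continuous)
  have hLne : ∀ w ∈ S, L w + 1 ≠ 0 := by
    intro w hw h
    have := congrArg Complex.re h
    simp at this
    have hw' : 0 < (L w).re := hw
    linarith
  have hψ : DifferentiableOn ℂ (fun w => (L w - 1) / (L w + 1)) S := by
    apply DifferentiableOn.div
    · exact (hLdiff.differentiableOn).sub_const 1
    · exact (hLdiff.differentiableOn).add_const 1
    · exact hLne
  have hGdiff : DifferentiableOn ℂ G S :=
    hf.comp hψ (fun w hw => cayley_mem_ball hw)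
  have hc2 : verticalClosedStrip 0 1 ⊆ S := by
    intro w hw
    have h0 : (0:ℝ) ≤ w.re := hw.1
    show 0 < (L w).re
    rw [hLre]
    nlinarith
  have hc1 : closure (verticalStrip 0 1) ⊆ verticalClosedStrip 0 1 :=
    closure_minimal (fun w hw => ⟨le_of_lt hw.1, le_of_lt hw.2⟩)
      (isClosed_Icc.preimage Complex.continuous_re)
  have hd : DiffContOnCl ℂ G (verticalStrip 0 1) :=
    DifferentiableOn.diffContOnCl (hGdiff.mono (hc1.trans hc2))
  have hB : BddAbove ((norm ∘ G) '' verticalClosedStrip 0 1) := by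
    refine ⟨1, ?_⟩
    rintro r ⟨w, hw, rfl⟩
    exact hb _ (cayley_mem_ball (hc2 hw))
  have ha : ∀ w ∈ Complex.re ⁻¹' {0}, ‖G w‖ ≤ 1 := by
    intro w hw
    apply hb
    apply cayley_mem_ball
    rw [hLre]
    simp only [Set.mem_preimage, Set.mem_singleton_iff] at hw
    rw [hw]
    simpa using hδ0
  have hbM : ∀ w ∈ Complex.re ⁻¹' {1}, ‖G w‖ ≤ M := by
    intro w hw
    simp only [Set.mem_preimage, Set.mem_singleton_iff] at hw
    have hre : 0 < (L w).re := by rw [hLre, hw]; nlinarith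
    have hdist : dist ((L w - 1) / (L w + 1)) ((ε : ℂ)) ≤ 1 - ε := by
      have := (cayley_horodisk_iff h1e hre).mpr (by
        rw [hLre, hw]
        have : (1 - ε) * b = ε := by
          rw [hbdef]; field_simp
        nlinarith)
      simpa [sub_sub_cancel] using this
    exact hM _ (cayley_mem_ball hre) hdist
  -- the point z
  have hz1 : z ≠ 1 := by
    intro h
    rw [h] at hz
    simp [mem_ball] at hz
  have h1z : (1 : ℂ) - z ≠ 0 := sub_ne_zero.mpr (Ne.symm hz1)
  set w0 : ℂ := (1 + z) / (1 - z) with hw0def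
  have hφ : (w0 - 1) / (w0 + 1) = z := by
    rw [hw0def]
    field_simp
    ring
  have hxz : Complex.normSq z < 1 := by
    have h : ‖z‖ < 1 := mem_ball_zero_iff.mp hz
    rw [← Complex.sq_norm]
    nlinarith [norm_nonneg z]
  have hnsd : 0 < Complex.normSq (1 - z) := Complex.normSq_pos.mpr h1z
  have hw0re : 0 < w0.re := by
    rw [hw0def, Complex.div_re, ← add_div]
    apply div_pos _ hnsd
    simp only [Complex.add_re, Complex.add_im, Complex.sub_re, Complex.sub_im,
      Complex.one_re, Complex.one_im]
    rw [Complex.normSq_apply] at hxz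
    nlinarith
  have hge1 : 1 ≤ w0.re := by
    have h12 : dist ((w0 - 1) / (w0 + 1)) (((1 - (1/2 : ℝ) : ℝ)) : ℂ) ≤ (1/2 : ℝ) := by
      rw [hφ]
      have hc : (((1 - (1/2 : ℝ) : ℝ)) : ℂ) = (1/2 : ℂ) := by norm_num
      rw [hc]
      exact hzd
    have := (cayley_horodisk_iff (by norm_num : (0:ℝ) < 1/2) hw0re).mp h12
    linarith
  rcases le_or_gt w0.re b with hcase | hcase
  · -- apply three lines
    set w1 : ℂ := (w0 - (δ : ℂ)) / ((b - δ : ℝ) : ℂ) with hw1def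
    have hw1re : w1.re = (w0.re - δ) / (b - δ) := by
      rw [hw1def, Complex.div_ofReal_re]
      simp
    have hLw1 : L w1 = w0 := by
      rw [hLdef, hw1def]
      have hne : ((b - δ : ℝ) : ℂ) ≠ 0 := Complex.ofReal_ne_zero.mpr hbδ.ne'
      show (δ:ℂ) + ((b - δ : ℝ):ℂ) * ((w0 - (δ:ℂ)) / ((b - δ : ℝ):ℂ)) = w0
      rw [mul_comm, div_mul_cancel₀ _ hne]
      ring
    have hmem : w1 ∈ verticalClosedStrip 0 1 := by
      constructor
      · rw [hw1re]; exact div_nonneg (by linarith) hbδ.le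
      · rw [hw1re, div_le_one hbδ]; linarith
    have key := norm_le_interp_of_mem_verticalClosedStrip₀₁' G hmem hd hB ha hbM
    have hGw1 : G w1 = f z := by
      rw [hGdef]
      simp only
      rw [hLw1, hφ]
    rw [hGw1, Real.one_rpow, one_mul] at key
    refine key.trans ?_
    apply Real.rpow_le_rpow_of_exponent_ge hM0 hM1
    rw [hw1re]
    exact (div_le_div_iff_of_pos_right hbδ).mpr (by linarith)
  · have hdist : dist z ((ε : ℂ)) ≤ 1 - ε := by
      have := (cayley_horodisk_iff h1e hw0re).mpr (by
        have hbe : (1 - ε) * b = ε := by rw [hbdef]; field_simp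
        nlinarith)
      rw [hφ] at this
      simpa [sub_sub_cancel] using this
    refine (hM z hz hdist).trans ?_
    calc M = M ^ (1 : ℝ) := (Real.rpow_one M).symm
      _ ≤ M ^ ((1 - δ) / (b - δ)) := by
          apply Real.rpow_le_rpow_of_exponent_ge hM0 hM1
          rw [div_le_one hbδ]
          linarith

/-- Hadamard three-lines bound on horodisks: if `f` is holomorphic on the
open unit disk `D` with `‖f‖ ≤ 1` there, `ε ∈ (1/2, 1)`, and `‖f‖ ≤ M` on the horodisk
`D_{1-ε} = ε + (1-ε)D̄` (intersected with `D`), then on the horodisk `D_{1/2} = 1/2 + (1/2)D̄`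
(intersected with `D`) we have `‖f‖ ≤ M^{(1-ε)/ε}`. -/
theorem hadamard_horodisk
    (ε : ℝ) (hε : 1 / 2 < ε) (hε1 : ε < 1)
    (f : ℂ → ℂ) (hf : DifferentiableOn ℂ f (ball (0 : ℂ) 1))
    (hb : ∀ z ∈ ball (0 : ℂ) 1, ‖f z‖ ≤ 1)
    (M : ℝ) (hM0 : 0 ≤ M)
    (hM : ∀ z ∈ ball (0 : ℂ) 1, dist z ((ε : ℂ)) ≤ 1 - ε → ‖f z‖ ≤ M) :
    ∀ z ∈ ball (0 : ℂ) 1, dist z ((1 / 2 : ℂ)) ≤ 1 / 2 → ‖f z‖ ≤ M ^ ((1 - ε) / ε) := by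
  intro z hz hzd
  have h1e : (0:ℝ) < 1 - ε := by linarith
  have hεp : (0:ℝ) < ε := by linarith
  have hq : 0 < (1 - ε) / ε := div_pos h1e hεp
  have hb1 : (1:ℝ) < ε / (1 - ε) := by rw [lt_div_iff₀ h1e]; linarith
  -- step 1: for positive M' ≤ 1 we can take the δ → 0 limit
  have step1 : ∀ M' : ℝ, 0 < M' → M' ≤ 1 →
      (∀ w ∈ ball (0 : ℂ) 1, dist w ((ε : ℂ)) ≤ 1 - ε → ‖f w‖ ≤ M') →
      ‖f z‖ ≤ M' ^ ((1 - ε) / ε) := by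
    intro M' hM0' hM1' hM'
    have hev : ∀ᶠ δ in 𝓝[>] (0:ℝ), ‖f z‖ ≤ M' ^ ((1 - δ) / (ε / (1 - ε) - δ)) := by
      apply Filter.eventually_of_mem (Ioo_mem_nhdsGT_of_mem (by constructor <;> norm_num :
        (0:ℝ) ∈ Ico (0:ℝ) 1))
      intro δ hδ
      exact hadamard_core ε hε hε1 f hf hb M' hM0' hM1' hM' δ hδ.1 hδ.2 z hz hzd
    have htt : Tendsto (fun δ : ℝ => M' ^ ((1 - δ) / (ε / (1 - ε) - δ))) (𝓝[>] (0:ℝ))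
        (𝓝 (M' ^ ((1 - (0:ℝ)) / (ε / (1 - ε) - 0)))) := by
      apply Filter.Tendsto.mono_left _ nhdsWithin_le_nhds
      apply ContinuousAt.tendsto
      have hbne : ε / (1 - ε) - (0:ℝ) ≠ 0 := by
        simp only [sub_zero]
        linarith
      have hcont : ContinuousAt (fun δ : ℝ => (1 - δ) / (ε / (1 - ε) - δ)) 0 :=
        ContinuousAt.div (by fun_prop) (by fun_prop) hbne
      -- rewrite rpow with fixed base as exp ∘ linear
      have hrw : ∀ t : ℝ, M' ^ t = Real.exp (Real.log M' * t) := fun t =>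
        Real.rpow_def_of_pos hM0' t
      simp only [hrw]
      exact (Real.continuous_exp.continuousAt).comp (continuousAt_const.mul hcont)
    have hlim : ‖f z‖ ≤ M' ^ ((1 - (0:ℝ)) / (ε / (1 - ε) - 0)) := ge_of_tendsto htt hev
    have heq : (1 - (0:ℝ)) / (ε / (1 - ε) - 0) = (1 - ε) / ε := by
      rw [sub_zero, sub_zero, one_div_div]
    rwa [heq] at hlim
  -- step 2: μ → 0 limit
  have key : ∀ μ : ℝ, 0 < μ → ‖f z‖ ≤ (min (M + μ) 1) ^ ((1 - ε) / ε) := by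
    intro μ hμ
    apply step1 _ (lt_min (by linarith) one_pos) (min_le_right _ _)
    intro w hw hwd
    exact le_min ((hM w hw hwd).trans (by linarith)) (hb w hw)
  have htt2 : Tendsto (fun μ : ℝ => (min (M + μ) 1) ^ ((1 - ε) / ε)) (𝓝[>] (0:ℝ))
      (𝓝 ((min (M + 0) 1) ^ ((1 - ε) / ε))) := by
    apply Filter.Tendsto.mono_left _ nhdsWithin_le_nhds
    apply ContinuousAt.tendsto
    have h1 : ContinuousAt (fun μ : ℝ => min (M + μ) 1) 0 := by fun_prop
    exact h1.rpow_const (Or.inr hq.le)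
  have hfin : ‖f z‖ ≤ (min (M + 0) 1) ^ ((1 - ε) / ε) :=
    ge_of_tendsto htt2 (Filter.eventually_of_mem self_mem_nhdsWithin (fun μ hμ => key μ hμ))
  refine hfin.trans ?_
  apply Real.rpow_le_rpow (le_min (by linarith) zero_le_one) _ hq.le
  rw [add_zero]
  exact min_le_left _ _

end HadamardAux
end

section
/- Fix ε ∈ (0, 1/2] and define t(δ) = inf over real sequences Δ = (Δ_j)_{j≥0} with Δ_0 ≥ δ and ∑_j |Δ_j| ≤ 1 of the total variation norm ‖∑_{j≥0} Δ_j · Bin(j, 1−ε)‖₁. Then δ ≤ t(δ) ≤ 2(1−ε)δ. -/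
/-- The binomial distribution `Bin(n,p)` as a point-mass function on `ℕ`. -/
noncomputable def binomPMF (n : ℕ) (p : ℝ) (k : ℕ) : ℝ :=
  (n.choose k : ℝ) * p ^ k * (1 - p) ^ (n - k)

lemma binomPMF_nonneg {n : ℕ} {p : ℝ} (hp0 : 0 ≤ p) (hp1 : p ≤ 1) (k : ℕ) :
    0 ≤ binomPMF n p k := by
  unfold binomPMF
  have h1 : (0:ℝ) ≤ 1 - p := by linarith
  positivity

lemma binomPMF_eq_zero {n k : ℕ} {p : ℝ} (h : n < k) : binomPMF n p k = 0 := by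
  unfold binomPMF
  rw [Nat.choose_eq_zero_of_lt h]
  simp

lemma sum_binomPMF_mul (n : ℕ) (p x : ℝ) :
    ∑ k ∈ Finset.range (n + 1), binomPMF n p k * x ^ k = (p * x + (1 - p)) ^ n := by
  rw [add_pow]
  refine Finset.sum_congr rfl fun k _ => ?_
  unfold binomPMF
  rw [mul_pow]
  ring

lemma sum_binomPMF (n : ℕ) (p : ℝ) :
    ∑ k ∈ Finset.range (n + 1), binomPMF n p k = 1 := by
  have := sum_binomPMF_mul n p 1
  simpa using this

lemma tsum_binomPMF_mul (n : ℕ) (p x : ℝ) :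
    ∑' k, binomPMF n p k * x ^ k = (p * x + (1 - p)) ^ n := by
  rw [tsum_eq_sum (s := Finset.range (n + 1)) (fun k hk => by
    have hnk : n < k := by simp [Finset.mem_range] at hk; omega
    simp [binomPMF_eq_zero hnk])]
  exact sum_binomPMF_mul n p x

lemma binomPMF_le_one {n : ℕ} {p : ℝ} (hp0 : 0 ≤ p) (hp1 : p ≤ 1) (k : ℕ) :
    binomPMF n p k ≤ 1 := by
  by_cases h : k ≤ n
  · calc binomPMF n p k ≤ ∑ j ∈ Finset.range (n + 1), binomPMF n p j :=
        Finset.single_le_sum (fun j _ => binomPMF_nonneg hp0 hp1 j)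
          (Finset.mem_range.mpr (Nat.lt_succ_of_le h))
    _ = 1 := sum_binomPMF n p
  · rw [binomPMF_eq_zero (Nat.lt_of_not_le h)]; norm_num

/-- For `ε ∈ (0, 1/2]` and `δ ∈ (0,1]`, the value
`t(δ) = inf {‖∑ⱼ Δⱼ Bin(j, 1-ε)‖₁ : Δ₀ ≥ δ, ‖Δ‖₁ ≤ 1}` satisfies
`δ ≤ t(δ) ≤ 2(1-ε)δ`: every feasible `Δ` has objective at least `δ`, and some
feasible `Δ` has objective at most `2(1-ε)δ`. -/
theorem lossy_minTV_low_erasure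
    (ε δ : ℝ) (hε0 : 0 < ε) (hε : ε ≤ 1 / 2) (hδ0 : 0 < δ) (hδ1 : δ ≤ 1) :
    (∀ Δ : ℕ → ℝ, Summable (fun j => |Δ j|) → δ ≤ Δ 0 → (∑' j, |Δ j|) ≤ 1 →
        δ ≤ ∑' k, |∑' j, Δ j * binomPMF j (1 - ε) k|) ∧
    (∃ Δ : ℕ → ℝ, Summable (fun j => |Δ j|) ∧ δ ≤ Δ 0 ∧ (∑' j, |Δ j|) ≤ 1 ∧
        (∑' k, |∑' j, Δ j * binomPMF j (1 - ε) k|) ≤ 2 * (1 - ε) * δ) := by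
  set p : ℝ := 1 - ε with hp
  have hp0 : 0 ≤ p := by simp [hp]; linarith
  have hp1 : p ≤ 1 := by simp [hp]; linarith
  have hp0' : 0 < p := by simp [hp]; linarith
  constructor
  · -- lower bound
    intro Δ hsum hΔ0 hl1
    set x : ℝ := -(ε / p) with hx
    have hxabs : |x| ≤ 1 := by
      rw [hx, abs_neg, abs_of_nonneg (by positivity)]
      rw [div_le_one hp0']
      simp [hp]; linarith
    have hzero : p * x + (1 - p) = 0 := by
      rw [hx, hp]
      have : (1 - ε) ≠ 0 := by linarith
      field_simp
      ring
    -- F j k := Δ j * binomPMF j p k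
    set F : ℕ → ℕ → ℝ := fun j k => Δ j * binomPMF j p k with hF
    have hFabs_sum : ∀ j, Summable fun k => |F j k| := fun j =>
      summable_of_ne_finset_zero (s := Finset.range (j + 1)) (fun k hk => by
        have : j < k := by simpa using hk
        simp [hF, binomPMF_eq_zero this])
    have hFabs_tsum : ∀ j, (∑' k, |F j k|) = |Δ j| := by
      intro j
      rw [tsum_eq_sum (s := Finset.range (j + 1)) (fun k hk => by
        have : j < k := by simpa using hk
        simp [hF, binomPMF_eq_zero this])]
      have : ∀ k ∈ Finset.range (j + 1), |F j k| = |Δ j| * binomPMF j p k := by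
        intro k _
        rw [hF, abs_mul, abs_of_nonneg (binomPMF_nonneg hp0 hp1 k)]
      rw [Finset.sum_congr rfl this, ← Finset.mul_sum, sum_binomPMF, mul_one]
    have hFprod : Summable (fun q : ℕ × ℕ => |F q.1 q.2|) := by
      rw [summable_prod_of_nonneg (fun q => abs_nonneg _)]
      constructor
      · exact fun j => hFabs_sum j
      · simpa only [hFabs_tsum] using hsum
    have hFprod' : Summable (Function.uncurry F) :=
      Summable.of_abs hFprod
    -- summability in j for each k
    have hFj : ∀ k, Summable fun j => F j k := fun k =>
      ((summable_prod_of_nonneg (fun q => abs_nonneg _)).mp hFprod).2 |> fun _ =>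
        (Summable.of_abs (((summable_prod_of_nonneg (f := fun q : ℕ × ℕ => |F q.2 q.1|)
          (fun q => abs_nonneg _)).mp (hFprod.prod_symm)).1 k))
    -- G k := inner tsum
    set G : ℕ → ℝ := fun k => ∑' j, F j k with hG
    have hGabs : Summable fun k => |G k| := by
      have h1 : Summable fun k => ∑' j, |F j k| :=
        ((summable_prod_of_nonneg (f := fun q : ℕ × ℕ => |F q.2 q.1|)
          (fun q => abs_nonneg _)).mp hFprod.prod_symm).2
      refine Summable.of_nonneg_of_le (fun k => abs_nonneg _) (fun k => ?_) h1
      have hsk : Summable fun j => |F j k| :=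
        ((summable_prod_of_nonneg (f := fun q : ℕ × ℕ => |F q.2 q.1|)
          (fun q => abs_nonneg _)).mp hFprod.prod_symm).1 k
      have := norm_tsum_le_tsum_norm (f := fun j => F j k)
        (by simp only [Real.norm_eq_abs]; exact hsk)
      simpa only [Real.norm_eq_abs] using this
    -- the alternating evaluation
    have hswap : ∑' j, (∑' k, F j k * x ^ k) = ∑' k, G k * x ^ k := by
      have := Summable.tsum_comm' (f := fun j k => F j k * x ^ k)
        (by
          have : Summable (fun q : ℕ × ℕ => |F q.1 q.2 * x ^ q.2|) := by
            refine Summable.of_nonneg_of_le (fun q => abs_nonneg _) (fun q => ?_) hFprod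
            rw [abs_mul]
            calc |F q.1 q.2| * |x ^ q.2| ≤ |F q.1 q.2| * 1 := by
                  refine mul_le_mul_of_nonneg_left ?_ (abs_nonneg _)
                  rw [abs_pow]
                  exact pow_le_one₀ (abs_nonneg _) hxabs
            _ = |F q.1 q.2| := mul_one _
          exact Summable.of_abs this)
        (fun j => Summable.of_abs (by
          refine summable_of_ne_finset_zero (s := Finset.range (j + 1)) (fun k hk => ?_)
          have : j < k := by simpa using hk
          simp [hF, binomPMF_eq_zero this]))
        (fun k => (hFj k).mul_right _)
      rw [← this]
      refine tsum_congr fun k => ?_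
      rw [hG, ← tsum_mul_right]
    have heval : ∀ j, (∑' k, F j k * x ^ k) = Δ j * (0 : ℝ) ^ j := by
      intro j
      have : (fun k => F j k * x ^ k) = fun k => Δ j * (binomPMF j p k * x ^ k) := by
        funext k; rw [hF]; ring
      rw [this, tsum_mul_left, tsum_binomPMF_mul, hzero]
    have hkey : Δ 0 = ∑' k, G k * x ^ k := by
      rw [← hswap]
      have : (∑' j, (∑' k, F j k * x ^ k)) = ∑' j, Δ j * (0:ℝ) ^ j :=
        tsum_congr heval
      rw [this]
      rw [tsum_eq_sum (s := {0}) (fun j hj => by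
        have : j ≠ 0 := by simpa using hj
        simp [zero_pow this])]
      simp
    calc δ ≤ Δ 0 := hΔ0
    _ = ∑' k, G k * x ^ k := hkey
    _ ≤ |∑' k, G k * x ^ k| := le_abs_self _
    _ ≤ ∑' k, |G k * x ^ k| := by
          have hsk : Summable fun k => |G k * x ^ k| := by
            refine Summable.of_nonneg_of_le (fun k => abs_nonneg _) (fun k => ?_) hGabs
            rw [abs_mul]
            calc |G k| * |x ^ k| ≤ |G k| * 1 := by
                  refine mul_le_mul_of_nonneg_left ?_ (abs_nonneg _)
                  rw [abs_pow]; exact pow_le_one₀ (abs_nonneg _) hxabs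
            _ = |G k| := mul_one _
          have := norm_tsum_le_tsum_norm (f := fun k => G k * x ^ k)
            (by simp only [Real.norm_eq_abs]; exact hsk)
          simpa only [Real.norm_eq_abs] using this
    _ ≤ ∑' k, |G k| := by
          refine Summable.tsum_le_tsum (fun k => ?_) ?_ hGabs
          · rw [abs_mul]
            calc |G k| * |x ^ k| ≤ |G k| * 1 := by
                  refine mul_le_mul_of_nonneg_left ?_ (abs_nonneg _)
                  rw [abs_pow]; exact pow_le_one₀ (abs_nonneg _) hxabs
            _ = |G k| := mul_one _
          · refine Summable.of_nonneg_of_le (fun k => abs_nonneg _) (fun k => ?_) hGabs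
            rw [abs_mul]
            calc |G k| * |x ^ k| ≤ |G k| * 1 := by
                  refine mul_le_mul_of_nonneg_left ?_ (abs_nonneg _)
                  rw [abs_pow]; exact pow_le_one₀ (abs_nonneg _) hxabs
            _ = |G k| := mul_one _
  · -- upper bound
    set m : ℝ := min δ (1 - δ) with hm
    have hm0 : 0 ≤ m := le_min (le_of_lt hδ0) (by linarith)
    have hmδ : m ≤ δ := min_le_left _ _
    have hm1 : m ≤ 1 - δ := min_le_right _ _
    refine ⟨fun j => if j = 0 then δ else if j = 1 then -m else 0, ?_, ?_, ?_, ?_⟩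
    · exact summable_of_ne_finset_zero (s := {0, 1}) (fun j hj => by
        simp at hj
        simp [hj.1, hj.2])
    · simp
    · rw [tsum_eq_sum (s := {0, 1}) (fun j hj => by
        simp at hj
        simp [hj.1, hj.2])]
      rw [Finset.sum_pair (by norm_num)]
      simp [abs_of_nonneg hm0, abs_of_pos hδ0]
      linarith
    · have hinner : ∀ k, (∑' j, (if j = 0 then δ else if j = 1 then -m else 0)
          * binomPMF j p k) = δ * binomPMF 0 p k - m * binomPMF 1 p k := by
        intro k
        rw [tsum_eq_sum (s := {0, 1}) (fun j hj => by
          simp at hj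
          simp [hj.1, hj.2])]
        rw [Finset.sum_pair (by norm_num)]
        norm_num
        ring
      have hval : ∀ k, δ * binomPMF 0 p k - m * binomPMF 1 p k =
          if k = 0 then δ - m * ε else if k = 1 then -(m * p) else 0 := by
        intro k
        match k with
        | 0 => simp [binomPMF, hp]
        | 1 => simp [binomPMF]
        | (n + 2) =>
          rw [binomPMF_eq_zero (by omega), binomPMF_eq_zero (by omega)]
          simp
      calc (∑' k, |∑' j, (if j = 0 then δ else if j = 1 then -m else 0) * binomPMF j p k|)
          = ∑' k, |if k = 0 then δ - m * ε else if k = 1 then -(m * p) else 0| := by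
            refine tsum_congr fun k => ?_
            rw [hinner k, hval k]
      _ = |δ - m * ε| + |-(m * p)| := by
            rw [tsum_eq_sum (s := {0, 1}) (fun k hk => by
              simp at hk
              simp [hk.1, hk.2])]
            rw [Finset.sum_pair (by norm_num)]
            norm_num
      _ = (δ - m * ε) + m * p := by
            rw [abs_neg, abs_of_nonneg (mul_nonneg hm0 hp0),
              abs_of_nonneg (by nlinarith)]
      _ ≤ 2 * (1 - ε) * δ := by
            have : p = 1 - ε := hp
            nlinarith [mul_le_mul_of_nonneg_right hmδ (by linarith : (0:ℝ) ≤ 1 - 2 * ε)]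
end

section
/- Let Θ, X be finite sets, Φ column-stochastic, h ∈ ℝ^Θ admitting values h(θ₊) ≥ 0 ≥ h(θ₋) for some θ₊, θ₋. Define δ(t) = max{⟨Δ,h⟩ : ‖Δ‖₁ ≤ 1, ‖ΦΔ‖₁ ≤ t} and the constrained version δ̃(t) = max{⟨Δ,h⟩ : ‖Δ‖₁ ≤ 1, ⟨Δ,1⟩ = 0, ‖ΦΔ‖₁ ≤ t}. Then δ̃(t) ≤ δ(t) ≤ 2·δ̃(t) for all t ∈ [0,1]. -/
open Finset

/-- With `Φ` column-stochastic and `h` taking both a nonnegative and a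
nonpositive value, the LP values
`δ(t) = max {⟨Δ,h⟩ : ‖Δ‖₁ ≤ 1, ‖ΦΔ‖₁ ≤ t}` and
`δ̃(t) = max {⟨Δ,h⟩ : ‖Δ‖₁ ≤ 1, ⟨Δ,1⟩ = 0, ‖ΦΔ‖₁ ≤ t}`
satisfy `δ̃(t) ≤ δ(t) ≤ 2 δ̃(t)` for all `t ∈ [0,1]`. -/
theorem lp_value_vs_balanced_lp_value
    {Θ X : Type*} [Fintype Θ] [Fintype X]
    (Φ : X → Θ → ℝ) (hΦpos : ∀ x θ, 0 ≤ Φ x θ) (hΦcol : ∀ θ, ∑ x, Φ x θ = 1)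
    (h : Θ → ℝ) (θp θm : Θ) (hθp : 0 ≤ h θp) (hθm : h θm ≤ 0)
    (t : ℝ) (ht0 : 0 ≤ t) (ht1 : t ≤ 1) :
    sSup {v : ℝ | ∃ Δ : Θ → ℝ, (∑ θ, |Δ θ|) ≤ 1 ∧ (∑ θ, Δ θ) = 0 ∧
        (∑ x, |∑ θ, Φ x θ * Δ θ|) ≤ t ∧ v = ∑ θ, Δ θ * h θ}
      ≤ sSup {v : ℝ | ∃ Δ : Θ → ℝ, (∑ θ, |Δ θ|) ≤ 1 ∧
        (∑ x, |∑ θ, Φ x θ * Δ θ|) ≤ t ∧ v = ∑ θ, Δ θ * h θ}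
    ∧
    sSup {v : ℝ | ∃ Δ : Θ → ℝ, (∑ θ, |Δ θ|) ≤ 1 ∧
        (∑ x, |∑ θ, Φ x θ * Δ θ|) ≤ t ∧ v = ∑ θ, Δ θ * h θ}
      ≤ 2 * sSup {v : ℝ | ∃ Δ : Θ → ℝ, (∑ θ, |Δ θ|) ≤ 1 ∧ (∑ θ, Δ θ) = 0 ∧
        (∑ x, |∑ θ, Φ x θ * Δ θ|) ≤ t ∧ v = ∑ θ, Δ θ * h θ} := by
  classical
  set S : Set ℝ := {v : ℝ | ∃ Δ : Θ → ℝ, (∑ θ, |Δ θ|) ≤ 1 ∧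
        (∑ x, |∑ θ, Φ x θ * Δ θ|) ≤ t ∧ v = ∑ θ, Δ θ * h θ} with hSdef
  set T : Set ℝ := {v : ℝ | ∃ Δ : Θ → ℝ, (∑ θ, |Δ θ|) ≤ 1 ∧ (∑ θ, Δ θ) = 0 ∧
        (∑ x, |∑ θ, Φ x θ * Δ θ|) ≤ t ∧ v = ∑ θ, Δ θ * h θ} with hTdef
  -- 0 belongs to both
  have h0T : (0 : ℝ) ∈ T := by
    refine ⟨fun _ => 0, by simp, by simp, by simpa using ht0, by simp⟩
  have h0S : (0 : ℝ) ∈ S := by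
    refine ⟨fun _ => 0, by simp, by simpa using ht0, by simp⟩
  have hTS : T ⊆ S := by
    rintro v ⟨Δ, h1, _, h3, h4⟩; exact ⟨Δ, h1, h3, h4⟩
  -- upper bound
  set M : ℝ := (univ : Finset Θ).sup' ⟨θp, mem_univ θp⟩ fun θ => |h θ| with hMdef
  have hM0 : 0 ≤ M := by
    rw [hMdef]
    exact (abs_nonneg (h θp)).trans (le_sup' (fun θ => |h θ|) (mem_univ θp))
  have hSub : ∀ v ∈ S, v ≤ M := by
    rintro v ⟨Δ, h1, _, rfl⟩
    calc ∑ θ, Δ θ * h θ ≤ ∑ θ, |Δ θ| * M := by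
          refine sum_le_sum fun θ _ => (le_abs_self _).trans ?_
          rw [abs_mul]
          exact mul_le_mul_of_nonneg_left (hMdef ▸ le_sup' (fun θ => |h θ|) (mem_univ θ)) (abs_nonneg _)
      _ = (∑ θ, |Δ θ|) * M := by rw [sum_mul]
      _ ≤ 1 * M := mul_le_mul_of_nonneg_right h1 hM0
      _ = M := one_mul M
  have hbddS : BddAbove S := ⟨M, hSub⟩
  have hbddT : BddAbove T := ⟨M, fun v hv => hSub v (hTS hv)⟩
  constructor
  · exact csSup_le_csSup hbddS ⟨0, h0T⟩ hTS
  · refine csSup_le ⟨0, h0S⟩ ?_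
    rintro v ⟨Δ, h1, h2, rfl⟩
    set s : ℝ := ∑ θ, Δ θ with hsdef
    -- |s| ≤ t
    have hst : |s| ≤ t := by
      have key : s = ∑ x, ∑ θ, Φ x θ * Δ θ := by
        rw [Finset.sum_comm]
        simp only [← Finset.sum_mul, hΦcol, one_mul, hsdef]
      calc |s| = |∑ x, ∑ θ, Φ x θ * Δ θ| := by rw [key]
        _ ≤ ∑ x, |∑ θ, Φ x θ * Δ θ| := Finset.abs_sum_le_sum_abs _ _
        _ ≤ t := h2
    have hs1 : |s| ≤ 1 := by
      calc |s| = |∑ θ, Δ θ| := rfl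
        _ ≤ ∑ θ, |Δ θ| := Finset.abs_sum_le_sum_abs _ _
        _ ≤ 1 := h1
    -- choose the sign-compensating point
    set θs : Θ := if 0 ≤ s then θm else θp with hθsdef
    have hsh : s * h θs ≤ 0 := by
      by_cases hcs : 0 ≤ s
      · simp only [hθsdef, if_pos hcs]
        exact mul_nonpos_of_nonneg_of_nonpos hcs hθm
      · simp only [hθsdef, if_neg hcs]
        exact mul_nonpos_of_nonpos_of_nonneg (le_of_not_ge hcs) hθp
    set Δ' : Θ → ℝ := fun θ => (Δ θ - s * (if θ = θs then 1 else 0)) / 2 with hΔ'def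
    have hind : ∀ θ, (0:ℝ) ≤ (if θ = θs then (1:ℝ) else 0) := by
      intro θ; split <;> norm_num
    have hindsum : (∑ θ, (if θ = θs then (1:ℝ) else 0)) = 1 := by simp
    have hmem : (∑ θ, Δ' θ * h θ) ∈ T := by
      refine ⟨Δ', ?_, ?_, ?_, rfl⟩
      · calc ∑ θ, |Δ' θ|
            ≤ ∑ θ, (|Δ θ| + |s| * (if θ = θs then 1 else 0)) / 2 := by
              refine sum_le_sum fun θ _ => ?_
              rw [hΔ'def, abs_div, abs_two]
              refine div_le_div_of_nonneg_right ?_ (by norm_num)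
              refine (abs_sub _ _).trans ?_
              rw [abs_mul]
              gcongr
              rw [abs_of_nonneg (hind θ)]
          _ = ((∑ θ, |Δ θ|) + |s| * ∑ θ, (if θ = θs then (1:ℝ) else 0)) / 2 := by
              rw [← Finset.sum_div, Finset.sum_add_distrib, Finset.mul_sum]
          _ ≤ (1 + |s| * 1) / 2 := by
              rw [hindsum]; gcongr
          _ ≤ 1 := by nlinarith
      · simp only [hΔ'def, sub_div, Finset.sum_sub_distrib, ← Finset.sum_div,
          ← Finset.mul_sum, hindsum, ← hsdef]
        ring
      · have hrow : ∀ x, (∑ θ, Φ x θ * Δ' θ) =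
            ((∑ θ, Φ x θ * Δ θ) - s * Φ x θs) / 2 := by
          intro x
          have hterm : ∀ θ, Φ x θ * Δ' θ =
              (Φ x θ * Δ θ - s * (Φ x θ * (if θ = θs then 1 else 0))) / 2 := by
            intro θ; simp only [hΔ'def]; ring
          simp only [hterm]
          rw [← Finset.sum_div, Finset.sum_sub_distrib, ← Finset.mul_sum]
          congr 2
          simp
        calc ∑ x, |∑ θ, Φ x θ * Δ' θ|
            ≤ ∑ x, (|∑ θ, Φ x θ * Δ θ| + |s| * Φ x θs) / 2 := by
              refine sum_le_sum fun x _ => ?_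
              rw [hrow x, abs_div, abs_two]
              refine div_le_div_of_nonneg_right ?_ (by norm_num)
              refine (abs_sub _ _).trans ?_
              rw [abs_mul, abs_of_nonneg (hΦpos x θs)]
          _ = ((∑ x, |∑ θ, Φ x θ * Δ θ|) + |s| * ∑ x, Φ x θs) / 2 := by
              rw [← Finset.sum_div, Finset.sum_add_distrib, Finset.mul_sum]
          _ ≤ (t + |s| * 1) / 2 := by
              rw [hΦcol θs]; gcongr
          _ ≤ t := by nlinarith
    have hwval : (∑ θ, Δ' θ * h θ) = ((∑ θ, Δ θ * h θ) - s * h θs) / 2 := by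
      have hterm : ∀ θ, Δ' θ * h θ =
          (Δ θ * h θ - s * ((if θ = θs then 1 else 0) * h θ)) / 2 := by
        intro θ; simp only [hΔ'def]; ring
      simp only [hterm]
      rw [← Finset.sum_div, Finset.sum_sub_distrib, ← Finset.mul_sum]
      congr 2
      simp
    have hle : (∑ θ, Δ' θ * h θ) ≤ sSup T := le_csSup hbddT hmem
    rw [hwval] at hle
    linarith
end

section
/- Strong duality for the linear estimator LP: with Φ an |X|×|Θ| column-stochastic matrix, h ∈ ℝ^Θ and n ≥ 1, one has min_{g ∈ ℝ^X} (‖Φᵀg − h‖_∞ + n^{-1/2}‖g‖_∞) = max{⟨y,h⟩ : y ∈ ℝ^Θ, ‖y‖₁ ≤ 1, ‖Φy‖₁ ≤ n^{-1/2}}. -/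
open Finset


lemma iSup_abs_nonneg' {ι : Type*} [Fintype ι] [Nonempty ι] (v : ι → ℝ) : 0 ≤ ⨆ i, |v i| :=
  le_ciSup_of_le (Set.finite_range _).bddAbove (Classical.arbitrary ι) (abs_nonneg _)

lemma abs_le_iSup' {ι : Type*} [Fintype ι] [Nonempty ι] (v : ι → ℝ) (i : ι) :
    |v i| ≤ ⨆ j, |v j| :=
  le_ciSup (f := fun j => |v j|) (Set.finite_range _).bddAbove i

section Core
variable {Θ X : Type*} [Fintype Θ] [Fintype X] [Nonempty Θ] [Nonempty X]

lemma approx_dual (Φ : X → Θ → ℝ) (h : Θ → ℝ) (s : ℝ) (hs : 0 < s) (p : ℝ)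
    (hp : ∀ g : X → ℝ, p ≤ (⨆ θ, |(∑ x, Φ x θ * g x) - h θ|) + s * ⨆ x, |g x|)
    (ε : ℝ) (hε : 0 < ε) :
    ∃ y : Θ → ℝ, (∑ θ, |y θ|) ≤ 1 + ε ∧
      (∑ x, |∑ θ, Φ x θ * y θ|) ≤ s + (Fintype.card X + 1) * ε ∧
      p - ε ≤ ∑ θ, y θ * h θ := by
  classical
  set vec : (Θ → ℝ) → (Θ → ℝ) → (X → ℝ) → (X → ℝ) → ℝ → ℝ → ℝ → ((X ⊕ Fin 3) → ℝ) :=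
    fun yp yn up un a c σ => Sum.elim
      (fun x => (∑ θ, Φ x θ * (yp θ - yn θ)) - (up x - un x))
      ![(∑ θ, (yp θ + yn θ)) + a, (∑ x, (up x + un x)) + c,
        (∑ θ, (yp θ - yn θ) * h θ) - σ] with hvec
  set S : Set ((X ⊕ Fin 3) → ℝ) := {v | ∃ yp yn up un a c σ, (∀ θ, 0 ≤ yp θ) ∧ (∀ θ, 0 ≤ yn θ) ∧
    (∀ x, 0 ≤ up x) ∧ (∀ x, 0 ≤ un x) ∧ 0 ≤ a ∧ 0 ≤ c ∧ 0 ≤ σ ∧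
    v = vec yp yn up un a c σ} with hS
  -- closure under addition
  have Sadd : ∀ v₁ ∈ S, ∀ v₂ ∈ S, v₁ + v₂ ∈ S := by
    rintro v₁ ⟨yp₁, yn₁, up₁, un₁, a₁, c₁, σ₁, h1, h2, h3, h4, h5, h6, h7, rfl⟩
      v₂ ⟨yp₂, yn₂, up₂, un₂, a₂, c₂, σ₂, k1, k2, k3, k4, k5, k6, k7, rfl⟩
    refine ⟨yp₁ + yp₂, yn₁ + yn₂, up₁ + up₂, un₁ + un₂, a₁ + a₂, c₁ + c₂, σ₁ + σ₂,
      fun θ => add_nonneg (h1 θ) (k1 θ), fun θ => add_nonneg (h2 θ) (k2 θ),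
      fun x => add_nonneg (h3 x) (k3 x), fun x => add_nonneg (h4 x) (k4 x),
      add_nonneg h5 k5, add_nonneg h6 k6, add_nonneg h7 k7, ?_⟩
    funext i
    rcases i with x | k
    · simp only [hvec, Sum.elim_inl, Pi.add_apply]
      have e1 : ∑ θ, Φ x θ * ((yp₁ θ + yp₂ θ) - (yn₁ θ + yn₂ θ))
          = ∑ θ, (Φ x θ * (yp₁ θ - yn₁ θ) + Φ x θ * (yp₂ θ - yn₂ θ)) :=
        Finset.sum_congr rfl fun θ _ => by ring
      rw [e1, Finset.sum_add_distrib]; ring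
    · fin_cases k
      · simp only [hvec, Sum.elim_inr, Pi.add_apply]
        simp only [show (⟨0, by omega⟩ : Fin 3) = 0 from rfl, Matrix.cons_val_zero]
        have e1 : ∑ θ, ((yp₁ θ + yp₂ θ) + (yn₁ θ + yn₂ θ))
            = ∑ θ, ((yp₁ θ + yn₁ θ) + (yp₂ θ + yn₂ θ)) :=
          Finset.sum_congr rfl fun θ _ => by ring
        rw [e1, Finset.sum_add_distrib]; (try simp only [Finset.sum_add_distrib]); ring
      · simp only [hvec, Sum.elim_inr, Pi.add_apply]
        simp only [show (⟨1, by omega⟩ : Fin 3) = 1 from rfl, Matrix.cons_val_one, Matrix.head_cons, Matrix.cons_val_zero]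
        have e1 : ∑ x, ((up₁ x + up₂ x) + (un₁ x + un₂ x))
            = ∑ x, ((up₁ x + un₁ x) + (up₂ x + un₂ x)) :=
          Finset.sum_congr rfl fun x _ => by ring
        rw [e1, Finset.sum_add_distrib]; (try simp only [Finset.sum_add_distrib]); ring
      · simp only [hvec, Sum.elim_inr, Pi.add_apply]
        have e0 : ∀ (A B C : ℝ), (![A, B, C] : Fin 3 → ℝ) ⟨2, by omega⟩ = C := fun A B C => by simp
        rw [e0, e0, e0]
        have e1 : ∑ θ, ((yp₁ θ + yp₂ θ) - (yn₁ θ + yn₂ θ)) * h θ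
            = ∑ θ, ((yp₁ θ - yn₁ θ) * h θ + (yp₂ θ - yn₂ θ) * h θ) :=
          Finset.sum_congr rfl fun θ _ => by ring
        rw [e1, Finset.sum_add_distrib]; (try simp only [Finset.sum_add_distrib]); ring
  -- closure under nonneg scaling
  have Ssmul : ∀ (r : ℝ), 0 ≤ r → ∀ v ∈ S, r • v ∈ S := by
    rintro r hr v ⟨yp, yn, up, un, a, c, σ, h1, h2, h3, h4, h5, h6, h7, rfl⟩
    refine ⟨r • yp, r • yn, r • up, r • un, r * a, r * c, r * σ,
      fun θ => mul_nonneg hr (h1 θ), fun θ => mul_nonneg hr (h2 θ),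
      fun x => mul_nonneg hr (h3 x), fun x => mul_nonneg hr (h4 x),
      mul_nonneg hr h5, mul_nonneg hr h6, mul_nonneg hr h7, ?_⟩
    funext i
    rcases i with x | k
    · simp only [hvec, Sum.elim_inl, Pi.smul_apply, smul_eq_mul]
      have e1 : ∑ θ, Φ x θ * ((r * yp θ) - (r * yn θ))
          = ∑ θ, r * (Φ x θ * (yp θ - yn θ)) :=
        Finset.sum_congr rfl fun θ _ => by ring
      rw [e1, ← Finset.mul_sum]; ring
    · fin_cases k
      · simp only [hvec, Sum.elim_inr, Pi.smul_apply, smul_eq_mul]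
        simp only [show (⟨0, by omega⟩ : Fin 3) = 0 from rfl, Matrix.cons_val_zero]
        have e1 : ∑ θ, ((r * yp θ) + (r * yn θ)) = ∑ θ, r * (yp θ + yn θ) :=
          Finset.sum_congr rfl fun θ _ => by ring
        rw [e1, ← Finset.mul_sum]; ring
      · simp only [hvec, Sum.elim_inr, Pi.smul_apply, smul_eq_mul]
        simp only [show (⟨1, by omega⟩ : Fin 3) = 1 from rfl, Matrix.cons_val_one, Matrix.head_cons, Matrix.cons_val_zero]
        have e1 : ∑ x, ((r * up x) + (r * un x)) = ∑ x, r * (up x + un x) :=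
          Finset.sum_congr rfl fun x _ => by ring
        rw [e1, ← Finset.mul_sum]; ring
      · simp only [hvec, Sum.elim_inr, Pi.smul_apply, smul_eq_mul]
        have e0 : ∀ (A B C : ℝ), (![A, B, C] : Fin 3 → ℝ) ⟨2, by omega⟩ = C := fun A B C => by simp
        rw [e0, e0]
        have e1 : ∑ θ, ((r * yp θ) - (r * yn θ)) * h θ = ∑ θ, r * ((yp θ - yn θ) * h θ) :=
          Finset.sum_congr rfl fun θ _ => by ring
        rw [e1, ← Finset.mul_sum]; ring
  have hS0 : (0 : (X ⊕ Fin 3) → ℝ) ∈ S := by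
    refine ⟨0, 0, 0, 0, 0, 0, 0, fun _ => le_refl _, fun _ => le_refl _, fun _ => le_refl _,
      fun _ => le_refl _, le_refl _, le_refl _, le_refl _, ?_⟩
    funext i
    rcases i with x | k
    · simp [hvec]
    · fin_cases k <;> simp [hvec]
  have Sconv : Convex ℝ S := by
    intro v₁ h1 v₂ h2 t u ht hu htu
    exact Sadd _ (Ssmul t ht v₁ h1) _ (Ssmul u hu v₂ h2)
  -- the target point
  set b : (X ⊕ Fin 3) → ℝ := Sum.elim 0 ![1, s, p] with hb
  have hbmem : b ∈ closure S := by
    by_contra hbn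
    obtain ⟨F, u, hFu, hub⟩ := geometric_hahn_banach_closed_point Sconv.closure
      isClosed_closure hbn
    have hu0 : 0 < u := by
      have := hFu 0 (subset_closure hS0)
      rwa [map_zero] at this
    have hle : ∀ v ∈ S, F v ≤ 0 := by
      intro v hv
      by_contra hc
      push_neg at hc
      have ht : 0 < (u + 1) / F v := div_pos (by linarith) hc
      have := hFu (((u + 1) / F v) • v) (subset_closure (Ssmul _ ht.le v hv))
      rw [map_smul, smul_eq_mul, div_mul_cancel₀ _ (ne_of_gt hc)] at this
      linarith
    -- coefficients of F
    set G : X → ℝ := fun x => F (fun j => if Sum.inl x = j then 1 else 0) with hG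
    set A : ℝ := F (fun j => if Sum.inr 0 = j then 1 else 0) with hA
    set B : ℝ := F (fun j => if Sum.inr 1 = j then 1 else 0) with hB
    set T : ℝ := F (fun j => if Sum.inr 2 = j then 1 else 0) with hT
    have hFexp : ∀ v : (X ⊕ Fin 3) → ℝ,
        F v = (∑ x, v (Sum.inl x) * G x) +
          (v (Sum.inr 0) * A + v (Sum.inr 1) * B + v (Sum.inr 2) * T) := by
      intro v
      conv_lhs => rw [pi_eq_sum_univ v, map_sum]
      simp only [map_smul, smul_eq_mul]
      rw [Fintype.sum_sum_type, Fin.sum_univ_three]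
    -- generator inequalities
    have bdd1 : BddAbove (Set.range fun θ => |(∑ x, Φ x θ * G x) + h θ * T|) :=
      (Set.finite_range _).bddAbove
    have bdd2 : BddAbove (Set.range fun x => |G x|) := (Set.finite_range _).bddAbove
    have iyp : ∀ θ0, (∑ x, Φ x θ0 * G x) + A + h θ0 * T ≤ 0 := by
      intro θ0
      have hmem : (Sum.elim (fun x => Φ x θ0) ![1, 0, h θ0] : (X ⊕ Fin 3) → ℝ) ∈ S := by
        refine ⟨(fun θ => if θ = θ0 then 1 else 0), 0, 0, 0, 0, 0, 0,
          fun θ => by positivity, fun _ => le_refl _, fun _ => le_refl _, fun _ => le_refl _,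
          le_refl _, le_refl _, le_refl _, ?_⟩
        funext i; rcases i with x | k
        · simp [hvec, mul_ite, Finset.sum_ite_eq']
        · fin_cases k <;> simp [hvec, ite_mul, Finset.sum_ite_eq']
      have h2 := hle _ hmem
      rw [hFexp] at h2
      simp only [Sum.elim_inl, Sum.elim_inr, Matrix.cons_val_zero, Matrix.cons_val_one,
        Matrix.head_cons, one_mul, zero_mul, add_zero, zero_add] at h2
      have e2 : (![(1:ℝ), 0, h θ0] : Fin 3 → ℝ) 2 = h θ0 := by simp
      rw [e2] at h2
      linarith
    have iyn : ∀ θ0, -(∑ x, Φ x θ0 * G x) + A - h θ0 * T ≤ 0 := by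
      intro θ0
      have hmem : (Sum.elim (fun x => -Φ x θ0) ![1, 0, -h θ0] : (X ⊕ Fin 3) → ℝ) ∈ S := by
        refine ⟨0, (fun θ => if θ = θ0 then 1 else 0), 0, 0, 0, 0, 0,
          fun _ => le_refl _, fun θ => by positivity, fun _ => le_refl _, fun _ => le_refl _,
          le_refl _, le_refl _, le_refl _, ?_⟩
        funext i; rcases i with x | k
        · simp [hvec, mul_ite, Finset.sum_ite_eq']
        · fin_cases k <;> simp [hvec, ite_mul, Finset.sum_ite_eq']
      have h2 := hle _ hmem
      rw [hFexp] at h2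
      simp only [Sum.elim_inl, Sum.elim_inr, Matrix.cons_val_zero, Matrix.cons_val_one,
        Matrix.head_cons, one_mul, zero_mul, add_zero, zero_add] at h2
      have e2 : (![(1:ℝ), 0, -h θ0] : Fin 3 → ℝ) 2 = -h θ0 := by simp
      rw [e2] at h2
      have e3 : ∑ x, -Φ x θ0 * G x = -(∑ x, Φ x θ0 * G x) := by
        rw [← Finset.sum_neg_distrib]; exact Finset.sum_congr rfl fun x _ => by ring
      rw [e3] at h2
      linarith
    have iup : ∀ x0, -G x0 + B ≤ 0 := by
      intro x0
      have hmem : (Sum.elim (fun x => if x = x0 then (-1:ℝ) else 0) ![0, 1, 0]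
          : (X ⊕ Fin 3) → ℝ) ∈ S := by
        refine ⟨0, 0, (fun x => if x = x0 then 1 else 0), 0, 0, 0, 0,
          fun _ => le_refl _, fun _ => le_refl _, fun x => by positivity, fun _ => le_refl _,
          le_refl _, le_refl _, le_refl _, ?_⟩
        funext i; rcases i with x | k
        · by_cases hx : x = x0 <;> simp [hvec, hx]
        · fin_cases k <;> simp [hvec, Finset.sum_ite_eq']
      have h2 := hle _ hmem
      rw [hFexp] at h2
      simp only [Sum.elim_inl, Sum.elim_inr, Matrix.cons_val_zero, Matrix.cons_val_one,
        Matrix.head_cons, one_mul, zero_mul, add_zero, zero_add, ite_mul, neg_mul,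
        Finset.sum_ite_eq', Finset.mem_univ, if_true] at h2
      have e2 : (![(0:ℝ), 1, 0] : Fin 3 → ℝ) 2 = 0 := by simp
      rw [e2] at h2
      linarith
    have iun : ∀ x0, G x0 + B ≤ 0 := by
      intro x0
      have hmem : (Sum.elim (fun x => if x = x0 then (1:ℝ) else 0) ![0, 1, 0]
          : (X ⊕ Fin 3) → ℝ) ∈ S := by
        refine ⟨0, 0, 0, (fun x => if x = x0 then 1 else 0), 0, 0, 0,
          fun _ => le_refl _, fun _ => le_refl _, fun _ => le_refl _, fun x => by positivity,
          le_refl _, le_refl _, le_refl _, ?_⟩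
        funext i; rcases i with x | k
        · by_cases hx : x = x0 <;> simp [hvec, hx]
        · fin_cases k <;> simp [hvec, Finset.sum_ite_eq']
      have h2 := hle _ hmem
      rw [hFexp] at h2
      simp only [Sum.elim_inl, Sum.elim_inr, Matrix.cons_val_zero, Matrix.cons_val_one,
        Matrix.head_cons, one_mul, zero_mul, add_zero, zero_add, ite_mul,
        Finset.sum_ite_eq', Finset.mem_univ, if_true] at h2
      have e2 : (![(0:ℝ), 1, 0] : Fin 3 → ℝ) 2 = 0 := by simp
      rw [e2] at h2
      linarith
    have iT : 0 ≤ T := by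
      have hmem : (Sum.elim 0 ![0, 0, -1] : (X ⊕ Fin 3) → ℝ) ∈ S := by
        refine ⟨0, 0, 0, 0, 0, 0, 1,
          fun _ => le_refl _, fun _ => le_refl _, fun _ => le_refl _, fun _ => le_refl _,
          le_refl _, le_refl _, zero_le_one, ?_⟩
        funext i; rcases i with x | k
        · simp [hvec]
        · fin_cases k <;> simp [hvec]
      have h2 := hle _ hmem
      rw [hFexp] at h2
      simp only [Sum.elim_inl, Sum.elim_inr, Matrix.cons_val_zero, Matrix.cons_val_one,
        Matrix.head_cons, one_mul, zero_mul, add_zero, zero_add, Pi.zero_apply,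
        Finset.sum_const_zero] at h2
      have e2 : (![(0:ℝ), 0, -1] : Fin 3 → ℝ) 2 = -1 := by simp
      rw [e2] at h2
      linarith
    set N : ℝ := ⨆ θ, |(∑ x, Φ x θ * G x) + h θ * T| with hN
    set M : ℝ := ⨆ x, |G x| with hM
    have hNA : N ≤ -A := ciSup_le fun θ => abs_le.mpr ⟨by linarith [iyn θ], by linarith [iyp θ]⟩
    have hMB : M ≤ -B := ciSup_le fun x => abs_le.mpr ⟨by linarith [iup x], by linarith [iun x]⟩
    have hN0 : 0 ≤ N :=
      le_ciSup_of_le bdd1 (Classical.arbitrary Θ) (abs_nonneg _)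
    have hM0 : 0 ≤ M :=
      le_ciSup_of_le bdd2 (Classical.arbitrary X) (abs_nonneg _)
    have key : p * T ≤ N + s * M := by
      rcases eq_or_lt_of_le iT with hT0 | hTpos
      · rw [← hT0, mul_zero]
        exact add_nonneg hN0 (mul_nonneg hs.le hM0)
      · set g' : X → ℝ := fun x => -G x / T with hg'
        have hb1 : (⨆ θ, |(∑ x, Φ x θ * g' x) - h θ|) ≤ N / T := by
          refine ciSup_le fun θ => ?_
          have e2 : ∑ x, Φ x θ * g' x = (-((∑ x, Φ x θ * G x))) / T := by
            rw [eq_div_iff (ne_of_gt hTpos), Finset.sum_mul, ← Finset.sum_neg_distrib]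
            exact Finset.sum_congr rfl fun x _ => by
              simp only [hg']; rw [mul_assoc, div_mul_cancel₀ _ (ne_of_gt hTpos)]; ring
          have e3 : (∑ x, Φ x θ * g' x) - h θ = -(((∑ x, Φ x θ * G x) + h θ * T) / T) := by
            rw [e2]; field_simp; ring
          rw [e3, abs_neg, abs_div, abs_of_pos hTpos]
          gcongr
          exact le_ciSup bdd1 θ
        have hb2 : (⨆ x, |g' x|) ≤ M / T := by
          refine ciSup_le fun x => ?_
          have : |g' x| = |G x| / T := by
            rw [hg']; rw [abs_div, abs_neg, abs_of_pos hTpos]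
          rw [this]
          gcongr
          exact le_ciSup bdd2 x
        have hple := hp g'
        have : p ≤ N / T + s * (M / T) :=
          hple.trans (add_le_add hb1 (mul_le_mul_of_nonneg_left hb2 hs.le))
        have e4 : N / T + s * (M / T) = (N + s * M) / T := by field_simp
        rw [e4] at this
        exact (le_div_iff₀ hTpos).mp this
    -- contradiction
    have hFb := hub
    rw [hFexp] at hFb
    simp only [hb, Sum.elim_inl, Sum.elim_inr, Pi.zero_apply, zero_mul,
      Finset.sum_const_zero, Matrix.cons_val_zero, Matrix.cons_val_one, Matrix.head_cons,
      one_mul, zero_add] at hFb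
    have e2 : (![(1:ℝ), s, p] : Fin 3 → ℝ) 2 = p := by simp
    rw [e2] at hFb
    have hsB : s * B ≤ -(s * M) := by
      have := mul_le_mul_of_nonneg_left hMB hs.le
      nlinarith [mul_le_mul_of_nonneg_left hMB hs.le]
    linarith [key, hNA, hu0]
  rw [Metric.mem_closure_iff] at hbmem
  obtain ⟨v, hvS, hdist⟩ := hbmem ε hε
  obtain ⟨yp, yn, up, un, a, c, σ, n1, n2, n3, n4, n5, n6, n7, rfl⟩ := hvS
  have hcomp : ∀ i, |b i - vec yp yn up un a c σ i| < ε := by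
    intro i
    have := (dist_pi_lt_iff hε).mp hdist i
    rwa [Real.dist_eq] at this
  have hc0 : |1 - ((∑ θ, (yp θ + yn θ)) + a)| < ε := by
    have := hcomp (Sum.inr 0)
    simpa [hb, hvec] using this
  have hc1 : |s - ((∑ x, (up x + un x)) + c)| < ε := by
    have := hcomp (Sum.inr 1)
    simpa [hb, hvec] using this
  have hc2 : |p - ((∑ θ, (yp θ - yn θ) * h θ) - σ)| < ε := by
    have := hcomp (Sum.inr 2)
    simpa [hb, hvec] using this
  have hcx : ∀ x, |(∑ θ, Φ x θ * (yp θ - yn θ)) - (up x - un x)| < ε := by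
    intro x
    have := hcomp (Sum.inl x)
    simp only [hb, hvec, Sum.elim_inl, Pi.zero_apply, zero_sub, abs_neg] at this
    exact this
  refine ⟨fun θ => yp θ - yn θ, ?_, ?_, ?_⟩
  · have h1sum : (∑ θ, (yp θ + yn θ)) ≤ 1 + ε := by
      have := (abs_lt.mp hc0).1
      linarith
    calc ∑ θ, |yp θ - yn θ| ≤ ∑ θ, (yp θ + yn θ) :=
          Finset.sum_le_sum fun θ _ => abs_le.mpr ⟨by linarith [n1 θ, n2 θ], by linarith [n1 θ, n2 θ]⟩
      _ ≤ 1 + ε := h1sum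
  · have h2sum : (∑ x, (up x + un x)) ≤ s + ε := by
      have := (abs_lt.mp hc1).1
      linarith
    have hxb : ∀ x, |∑ θ, Φ x θ * (yp θ - yn θ)| ≤ (up x + un x) + ε := by
      intro x
      have h3 := abs_add_le ((∑ θ, Φ x θ * (yp θ - yn θ)) - (up x - un x)) (up x - un x)
      rw [sub_add_cancel] at h3
      have h4 : |up x - un x| ≤ up x + un x :=
        abs_le.mpr ⟨by linarith [n3 x, n4 x], by linarith [n3 x, n4 x]⟩
      have h5 := (hcx x).le
      linarith
    calc ∑ x, |∑ θ, Φ x θ * (yp θ - yn θ)|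
        ≤ ∑ x, ((up x + un x) + ε) := Finset.sum_le_sum fun x _ => hxb x
      _ = (∑ x, (up x + un x)) + (Fintype.card X : ℝ) * ε := by
          rw [Finset.sum_add_distrib, Finset.sum_const, Finset.card_univ, nsmul_eq_mul]
      _ ≤ s + ε + (Fintype.card X : ℝ) * ε := by linarith
      _ = s + ((Fintype.card X : ℝ) + 1) * ε := by ring
  · have := (abs_lt.mp hc2).2
    have h6 : ∑ θ, (yp θ - yn θ) * h θ = ∑ θ, (fun θ => yp θ - yn θ) θ * h θ := rfl
    rw [← h6]
    linarith


lemma weak_dual {Θ X : Type*} [Fintype Θ] [Fintype X] [Nonempty Θ] [Nonempty X]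
    (Φ : X → Θ → ℝ) (h : Θ → ℝ) (s : ℝ) (hs : 0 ≤ s) (y : Θ → ℝ)
    (hy1 : (∑ θ, |y θ|) ≤ 1) (hy2 : (∑ x, |∑ θ, Φ x θ * y θ|) ≤ s) (g : X → ℝ) :
    ∑ θ, y θ * h θ ≤ (⨆ θ, |(∑ x, Φ x θ * g x) - h θ|) + s * ⨆ x, |g x| := by
  set N := ⨆ θ, |(∑ x, Φ x θ * g x) - h θ| with hN
  set M := ⨆ x, |g x| with hM
  have hN0 : 0 ≤ N := iSup_abs_nonneg' (fun θ => (∑ x, Φ x θ * g x) - h θ)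
  have hM0 : 0 ≤ M := iSup_abs_nonneg' g
  have split : ∑ θ, y θ * h θ
      = (∑ θ, y θ * (h θ - (∑ x, Φ x θ * g x))) + ∑ θ, y θ * (∑ x, Φ x θ * g x) := by
    rw [← Finset.sum_add_distrib]; exact Finset.sum_congr rfl fun θ _ => by ring
  have t1 : (∑ θ, y θ * (h θ - (∑ x, Φ x θ * g x))) ≤ N := by
    calc ∑ θ, y θ * (h θ - ∑ x, Φ x θ * g x) ≤ ∑ θ, |y θ| * N := by
          refine Finset.sum_le_sum fun θ _ => ?_
          have h1 : y θ * (h θ - ∑ x, Φ x θ * g x) ≤ |y θ| * |h θ - ∑ x, Φ x θ * g x| := by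
            calc y θ * (h θ - ∑ x, Φ x θ * g x) ≤ |y θ * (h θ - ∑ x, Φ x θ * g x)| :=
                  le_abs_self _
              _ = |y θ| * |h θ - ∑ x, Φ x θ * g x| := abs_mul _ _
          have h2 : |h θ - ∑ x, Φ x θ * g x| ≤ N := by
            rw [abs_sub_comm]; exact abs_le_iSup' (fun θ => (∑ x, Φ x θ * g x) - h θ) θ
          nlinarith [abs_nonneg (y θ)]
      _ = (∑ θ, |y θ|) * N := by rw [Finset.sum_mul]
      _ ≤ 1 * N := mul_le_mul_of_nonneg_right hy1 hN0
      _ = N := one_mul N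
  have t2 : (∑ θ, y θ * (∑ x, Φ x θ * g x)) ≤ s * M := by
    have swap : ∑ θ, y θ * (∑ x, Φ x θ * g x) = ∑ x, (∑ θ, Φ x θ * y θ) * g x := by
      calc ∑ θ, y θ * ∑ x, Φ x θ * g x = ∑ θ, ∑ x, y θ * (Φ x θ * g x) :=
            Finset.sum_congr rfl fun θ _ => Finset.mul_sum _ _ _
        _ = ∑ x, ∑ θ, y θ * (Φ x θ * g x) := Finset.sum_comm
        _ = ∑ x, (∑ θ, Φ x θ * y θ) * g x := Finset.sum_congr rfl fun x _ => by
              rw [Finset.sum_mul]; exact Finset.sum_congr rfl fun θ _ => by ring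
    rw [swap]
    calc ∑ x, (∑ θ, Φ x θ * y θ) * g x ≤ ∑ x, |∑ θ, Φ x θ * y θ| * M := by
          refine Finset.sum_le_sum fun x _ => ?_
          have h1 := le_abs_self ((∑ θ, Φ x θ * y θ) * g x)
          rw [abs_mul] at h1
          have h2 : |g x| ≤ M := abs_le_iSup' g x
          nlinarith [abs_nonneg (∑ θ, Φ x θ * y θ)]
      _ = (∑ x, |∑ θ, Φ x θ * y θ|) * M := by rw [Finset.sum_mul]
      _ ≤ s * M := mul_le_mul_of_nonneg_right hy2 hM0
  linarith

end Core

/-- Strong duality for the linear-estimator LP: for a column-stochastic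
matrix `Φ`, `h : Θ → ℝ` and `n ≥ 1`,
`min_g (‖Φᵀg - h‖_∞ + n^{-1/2} ‖g‖_∞) = max {⟨y,h⟩ : ‖y‖₁ ≤ 1, ‖Φy‖₁ ≤ n^{-1/2}}`. -/
theorem linear_estimator_strong_duality
    {Θ X : Type*} [Fintype Θ] [Fintype X] [Nonempty Θ] [Nonempty X]
    (Φ : X → Θ → ℝ) (hΦpos : ∀ x θ, 0 ≤ Φ x θ) (hΦcol : ∀ θ, ∑ x, Φ x θ = 1)
    (h : Θ → ℝ) (n : ℕ) (hn : 1 ≤ n) :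
    sInf {v : ℝ | ∃ g : X → ℝ,
        v = (⨆ θ, |(∑ x, Φ x θ * g x) - h θ|) + (1 / Real.sqrt n) * ⨆ x, |g x|}
      = sSup {v : ℝ | ∃ y : Θ → ℝ, (∑ θ, |y θ|) ≤ 1 ∧
          (∑ x, |∑ θ, Φ x θ * y θ|) ≤ 1 / Real.sqrt n ∧ v = ∑ θ, y θ * h θ} := by
  classical
  have hn0 : (0:ℝ) < Real.sqrt n := Real.sqrt_pos.mpr (by exact_mod_cast Nat.lt_of_lt_of_le Nat.zero_lt_one hn)
  set s : ℝ := 1 / Real.sqrt n with hsdef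
  have hs : 0 < s := div_pos one_pos hn0
  set P : Set ℝ := {v : ℝ | ∃ g : X → ℝ,
      v = (⨆ θ, |(∑ x, Φ x θ * g x) - h θ|) + s * ⨆ x, |g x|} with hPdef
  set D : Set ℝ := {v : ℝ | ∃ y : Θ → ℝ, (∑ θ, |y θ|) ≤ 1 ∧
      (∑ x, |∑ θ, Φ x θ * y θ|) ≤ s ∧ v = ∑ θ, y θ * h θ} with hDdef
  have hPne : P.Nonempty := ⟨_, ⟨0, rfl⟩⟩
  have hD0 : (0:ℝ) ∈ D := by
    refine ⟨0, by simp, ?_, by simp⟩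
    simpa using hs.le
  have hPnn : ∀ w ∈ P, (0:ℝ) ≤ w := by
    rintro w ⟨g, rfl⟩
    have h1 := iSup_abs_nonneg' (fun θ => (∑ x, Φ x θ * g x) - h θ)
    have h2 := iSup_abs_nonneg' g
    have := mul_nonneg hs.le h2
    linarith
  have hweak : ∀ v ∈ D, ∀ w ∈ P, v ≤ w := by
    rintro v ⟨y, hy1, hy2, rfl⟩ w ⟨g, rfl⟩
    exact weak_dual Φ h s hs.le y hy1 hy2 g
  have hDbdd : BddAbove D := by
    obtain ⟨w0, hw0⟩ := hPne
    exact ⟨w0, fun v hv => hweak v hv w0 hw0⟩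
  apply le_antisymm
  · set p := sInf P with hpdef
    have hplb : ∀ g : X → ℝ, p ≤ (⨆ θ, |(∑ x, Φ x θ * g x) - h θ|) + s * ⨆ x, |g x| :=
      fun g => csInf_le ⟨0, fun w hw => hPnn w hw⟩ ⟨g, rfl⟩
    have hp0 : 0 ≤ p := le_csInf hPne hPnn
    refine le_of_forall_sub_le ?_
    intro δ hδ
    by_cases hpd : p ≤ δ
    · exact le_trans (by linarith) (le_csSup hDbdd hD0)
    push_neg at hpd
    obtain ⟨K, hK⟩ : ∃ K : ℝ, K = (Fintype.card X : ℝ) := ⟨_, rfl⟩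
    have hK0 : 0 ≤ K := by rw [hK]; positivity
    obtain ⟨Mc, hMc⟩ : ∃ M : ℝ, M = 1 + (K + 1) / s := ⟨_, rfl⟩
    have hMc1 : 1 ≤ Mc := by
      have : 0 ≤ (K + 1) / s := div_nonneg (by linarith) hs.le
      rw [hMc]; linarith
    have hMp0 : 0 < 1 + Mc * p := by
      have := mul_nonneg (by linarith : (0:ℝ) ≤ Mc) hp0
      linarith
    obtain ⟨ε, hεdef⟩ : ∃ e : ℝ, e = min (δ / (1 + Mc * p)) (min p (1 / Mc)) := ⟨_, rfl⟩
    have hε0 : 0 < ε := by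
      rw [hεdef]
      exact lt_min (div_pos hδ hMp0)
        (lt_min (lt_trans hδ hpd) (div_pos one_pos (by linarith)))
    obtain ⟨y, hy1, hy2, hy3⟩ := approx_dual Φ h s hs p hplb ε hε0
    rw [← hK] at hy2
    have hden : 0 < s + (K + 1) * ε := by nlinarith
    obtain ⟨c, hcdef⟩ : ∃ c : ℝ, c = min (1 / (1 + ε)) (s / (s + (K + 1) * ε)) := ⟨_, rfl⟩
    have hc0 : 0 < c := by
      rw [hcdef]
      exact lt_min (div_pos one_pos (by linarith)) (div_pos hs hden)
    have hfeas1 : (∑ θ, |c * y θ|) ≤ 1 := by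
      have e : ∑ θ, |c * y θ| = c * ∑ θ, |y θ| := by
        rw [Finset.mul_sum]
        exact Finset.sum_congr rfl fun θ _ => by rw [abs_mul, abs_of_pos hc0]
      rw [e]
      have h1 : c ≤ 1 / (1 + ε) := by rw [hcdef]; exact min_le_left _ _
      have h2 : c * (∑ θ, |y θ|) ≤ c * (1 + ε) := mul_le_mul_of_nonneg_left hy1 hc0.le
      have h3 : c * (1 + ε) ≤ (1 / (1 + ε)) * (1 + ε) :=
        mul_le_mul_of_nonneg_right h1 (by linarith)
      rw [one_div_mul_cancel (by linarith : (1:ℝ) + ε ≠ 0)] at h3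
      linarith
    have hfeas2 : (∑ x, |∑ θ, Φ x θ * (c * y θ)|) ≤ s := by
      have e : ∀ x, ∑ θ, Φ x θ * (c * y θ) = c * ∑ θ, Φ x θ * y θ := fun x => by
        rw [Finset.mul_sum]; exact Finset.sum_congr rfl fun θ _ => by ring
      have e2 : ∑ x, |∑ θ, Φ x θ * (c * y θ)| = c * ∑ x, |∑ θ, Φ x θ * y θ| := by
        rw [Finset.mul_sum]
        refine Finset.sum_congr rfl fun x _ => ?_
        rw [e x, abs_mul, abs_of_pos hc0]
      rw [e2]
      have h1 : c ≤ s / (s + (K + 1) * ε) := by rw [hcdef]; exact min_le_right _ _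
      have h2 : c * (∑ x, |∑ θ, Φ x θ * y θ|) ≤ c * (s + (K + 1) * ε) :=
        mul_le_mul_of_nonneg_left hy2 hc0.le
      have h3 : c * (s + (K + 1) * ε) ≤ (s / (s + (K + 1) * ε)) * (s + (K + 1) * ε) :=
        mul_le_mul_of_nonneg_right h1 hden.le
      rw [div_mul_cancel₀ _ (ne_of_gt hden)] at h3
      linarith
    have hval : c * (p - ε) ≤ ∑ θ, (c * y θ) * h θ := by
      have e : ∑ θ, (c * y θ) * h θ = c * ∑ θ, y θ * h θ := by
        rw [Finset.mul_sum]; exact Finset.sum_congr rfl fun θ _ => by ring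
      rw [e]
      exact mul_le_mul_of_nonneg_left hy3 hc0.le
    have hmemD : (∑ θ, (c * y θ) * h θ) ∈ D := ⟨fun θ => c * y θ, hfeas1, hfeas2, rfl⟩
    have hsup := le_csSup hDbdd hmemD
    have hεle1 : ε ≤ δ / (1 + Mc * p) := by rw [hεdef]; exact min_le_left _ _
    have hεle2 : ε ≤ p := by rw [hεdef]; exact le_trans (min_le_right _ _) (min_le_left _ _)
    have hclb : 1 - Mc * ε ≤ c := by
      have c1 : 1 - ε ≤ 1 / (1 + ε) := by
        rw [le_div_iff₀ (by linarith : (0:ℝ) < 1 + ε)]; nlinarith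
      have c2 : 1 - (K + 1) * ε / s ≤ s / (s + (K + 1) * ε) := by
        rw [le_div_iff₀ hden]
        have e5 : (1 - (K + 1) * ε / s) * (s + (K + 1) * ε)
            = s - ((K + 1) * ε) * ((K + 1) * ε) / s := by
          field_simp; ring
        rw [e5]
        have : 0 ≤ ((K + 1) * ε) * ((K + 1) * ε) / s := by positivity
        linarith
      rw [hcdef]
      refine le_min (le_trans ?_ c1) (le_trans ?_ c2)
      · have := mul_le_mul_of_nonneg_right hMc1 hε0.le
        linarith
      · have e6 : (K + 1) * ε / s = ((K + 1) / s) * ε := by ring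
        rw [e6]
        have h7 : (K + 1) / s ≤ Mc := by rw [hMc]; linarith
        have := mul_le_mul_of_nonneg_right h7 hε0.le
        linarith
    have final : p - δ ≤ c * (p - ε) := by
      have h1 : (1 - Mc * ε) * (p - ε) ≤ c * (p - ε) :=
        mul_le_mul_of_nonneg_right hclb (by linarith)
      have h3 : ε * (1 + Mc * p) ≤ δ := (le_div_iff₀ hMp0).mp hεle1
      have h4 : 0 ≤ Mc * ε * ε := mul_nonneg (mul_nonneg (by linarith) hε0.le) hε0.le
      nlinarith [h1, h3, h4]
    linarith
  · exact csSup_le ⟨0, hD0⟩ fun v hv => le_csInf hPne fun w hw => hweak v hv w hw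
end

section
/- For n ≥ 1 and 0 ≤ p < 1, the chi-squared divergence satisfies χ²(Bin(n−1,p) ‖ Bin(n,p)) ≤ p/(n(1−p)). -/
lemma binom_mass (m : ℕ) (p : ℝ) :
    ∑ k ∈ Finset.range (m + 1), binomPMF m p k = 1 := by
  have h := add_pow p (1 - p) m
  simp only [add_sub_cancel, one_pow] at h
  calc ∑ k ∈ Finset.range (m + 1), binomPMF m p k
      = ∑ k ∈ Finset.range (m + 1), p ^ k * (1 - p) ^ (m - k) * (m.choose k : ℝ) :=
        Finset.sum_congr rfl fun k _ => by unfold binomPMF; ring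
    _ = 1 := h.symm

lemma binom_choose_id (m k : ℕ) (hkm : k ≤ m) :
    (m.choose k : ℝ) * (m + 1) = ((m + 1).choose k : ℝ) * ((m : ℝ) + 1 - k) := by
  have h2 := congrArg (Nat.cast (R := ℝ)) (Nat.choose_mul_succ_eq m k)
  push_cast [Nat.cast_sub (Nat.le_succ_of_le hkm)] at h2
  linarith [h2]

lemma binom_sub_mean (m : ℕ) (p : ℝ) :
    ∑ k ∈ Finset.range (m + 1), ((m : ℝ) - k) * binomPMF m p k = m * (1 - p) := by
  cases m with
  | zero => simp [binomPMF]
  | succ s =>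
    have key : ∀ k ∈ Finset.range (s + 2),
        ((s + 1 : ℝ) - k) * binomPMF (s + 1) p k
          = ((s : ℝ) + 1) * (1 - p) * binomPMF s p k := by
      intro k hk
      rcases Nat.lt_succ_iff_lt_or_eq.mp (Finset.mem_range.mp hk) with hk' | hk'
      · have hkm : k ≤ s := Nat.lt_succ_iff.mp hk'
        have hid := binom_choose_id s k hkm
        have hpow : (1 - p) ^ (s + 1 - k) = (1 - p) * (1 - p) ^ (s - k) := by
          rw [Nat.succ_sub hkm, pow_succ']
        unfold binomPMF
        rw [hpow]
        linear_combination (-(p ^ k * (1 - p) ^ (s - k) * (1 - p))) * hid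
      · subst hk'
        simp [binomPMF, Nat.choose_succ_self]
    have goal' : ∑ k ∈ Finset.range (s + 2), ((s : ℝ) + 1 - k) * binomPMF (s + 1) p k
        = ((s : ℝ) + 1) * (1 - p) := by
      rw [Finset.sum_congr rfl key, Finset.range_add_one, Finset.sum_insert (by simp)]
      have : binomPMF s p (s + 1) = 0 := by simp [binomPMF, Nat.choose_succ_self]
      rw [this, ← Finset.mul_sum, binom_mass]
      ring
    push_cast
    exact goal'

/-- For `n ≥ 1` and `0 ≤ p < 1`, the chi-squared divergence satisfies
`χ²(Bin(n-1,p) ‖ Bin(n,p)) = ∑ₖ Bin(n-1,p)(k)²/Bin(n,p)(k) - 1 ≤ p/(n(1-p))`. -/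
theorem chi_squared_binomial
    (n : ℕ) (hn : 1 ≤ n) (p : ℝ) (hp0 : 0 ≤ p) (hp1 : p < 1) :
    (∑' k : ℕ, (binomPMF (n - 1) p k) ^ 2 / binomPMF n p k) - 1
      ≤ p / ((n : ℝ) * (1 - p)) := by
  obtain ⟨m, rfl⟩ : ∃ m, n = m + 1 := ⟨n - 1, (Nat.succ_pred_eq_of_pos hn).symm⟩
  simp only [Nat.add_sub_cancel]
  have hq : (0:ℝ) < 1 - p := by linarith
  set c : ℝ := ((m:ℝ) + 1) * (1 - p) with hc
  have hcpos : 0 < c := by positivity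
  have hsupp : ∀ k ∉ Finset.range (m + 1),
      (binomPMF m p k) ^ 2 / binomPMF (m + 1) p k = 0 := by
    intro k hk
    have : m < k := by simpa using hk
    simp [binomPMF, Nat.choose_eq_zero_of_lt this]
  rw [tsum_eq_sum hsupp]
  have hterm : ∀ k ∈ Finset.range (m + 1),
      (binomPMF m p k) ^ 2 / binomPMF (m + 1) p k
        = (((m:ℝ) + 1 - k) * binomPMF m p k) / c := by
    intro k hk
    have hkm : k ≤ m := Nat.lt_succ_iff.mp (Finset.mem_range.mp hk)
    have hnid := binom_choose_id m k hkm
    have hpow : (1 - p) ^ (m + 1 - k) = (1 - p) * (1 - p) ^ (m - k) := by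
      rw [Nat.succ_sub hkm, pow_succ']
    have hid : c * binomPMF m p k = ((m:ℝ) + 1 - k) * binomPMF (m + 1) p k := by
      unfold binomPMF
      rw [hpow, hc]
      linear_combination (p ^ k * (1 - p) ^ (m - k) * (1 - p)) * hnid
    by_cases hQ : binomPMF (m + 1) p k = 0
    · have hP : binomPMF m p k = 0 := by
        rcases mul_eq_zero.mp (by rw [hid, hQ, mul_zero]) with h | h
        · exact absurd h hcpos.ne'
        · exact h
      simp [hP, hQ]
    · rw [eq_div_iff hcpos.ne', div_mul_eq_mul_div, div_eq_iff hQ]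
      linear_combination binomPMF m p k * hid
  rw [Finset.sum_congr rfl hterm, ← Finset.sum_div]
  have hsum : ∑ k ∈ Finset.range (m + 1), ((m:ℝ) + 1 - k) * binomPMF m p k
      = m * (1 - p) + 1 := by
    have : ∀ k ∈ Finset.range (m + 1), ((m:ℝ) + 1 - k) * binomPMF m p k
        = ((m:ℝ) - k) * binomPMF m p k + binomPMF m p k := by
      intro k _; ring
    rw [Finset.sum_congr rfl this, Finset.sum_add_distrib, binom_sub_mean, binom_mass]
  rw [hsum]
  have key : ((m:ℝ) * (1 - p) + 1) / c - 1 = p / c := by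
    rw [hc]; field_simp; ring
  rw [key, hc]
  push_cast
  exact le_refl _
end

section
/- Let {P_θ}, {Q_θ} be families of probability measures indexed by θ ∈ Θ, and suppose there exists a measure Q* with H(Q*, Q_θ) ≤ τ for all θ. Then for any priors π, π' on Θ, H(E_{θ∼π}[P_θ ⊗ Q_θ], E_{θ∼π'}[P_θ ⊗ Q_θ]) ≤ H(E_{θ∼π}P_θ, E_{θ∼π'}P_θ) + 2τ. -/
open MeasureTheory
open scoped ENNReal

/-- Squared Hellinger distance `H²(P,Q) = ∫ (√(dP/dμ) - √(dQ/dμ))² dμ` with `μ = P + Q`. -/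
noncomputable def sqHellinger {α : Type*} [MeasurableSpace α] (P Q : Measure α) : ℝ :=
  ∫ x, (Real.sqrt ((P.rnDeriv (P + Q)) x).toReal
      - Real.sqrt ((Q.rnDeriv (P + Q)) x).toReal) ^ 2 ∂(P + Q)

/-- Hellinger distance. -/
noncomputable def hellinger {α : Type*} [MeasurableSpace α] (P Q : Measure α) : ℝ :=
  Real.sqrt (sqHellinger P Q)

open scoped NNReal

namespace HellingerAux

variable {α β : Type*} [MeasurableSpace α] [MeasurableSpace β]

/-- Bhattacharyya coefficient w.r.t. base measure `ν`. -/
noncomputable def BC (ν P Q : Measure α) : ℝ≥0∞ :=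
  ∫⁻ x, (P.rnDeriv ν x) ^ (1/2 : ℝ) * (Q.rnDeriv ν x) ^ (1/2 : ℝ) ∂ν

lemma half_half (a : ℝ≥0∞) : a ^ (1/2 : ℝ) * a ^ (1/2 : ℝ) = a := by
  rw [← ENNReal.rpow_add_of_nonneg _ _ (by norm_num) (by norm_num)]
  norm_num

lemma mul_rpow_half (a b c : ℝ≥0∞) :
    (a * c) ^ (1/2:ℝ) * ((b * c) ^ (1/2:ℝ)) = c * (a ^ (1/2:ℝ) * b ^ (1/2:ℝ)) := by
  rw [ENNReal.mul_rpow_of_nonneg _ _ (by norm_num : (0:ℝ) ≤ 1/2),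
    ENNReal.mul_rpow_of_nonneg _ _ (by norm_num : (0:ℝ) ≤ 1/2),
    mul_mul_mul_comm]
  rw [half_half]
  ring

lemma amgm (a b : ℝ≥0∞) : 2 * (a ^ (1/2:ℝ) * b ^ (1/2:ℝ)) ≤ a + b := by
  rcases eq_or_ne a ⊤ with rfl | ha
  · simp [top_add]
  rcases eq_or_ne b ⊤ with rfl | hb
  · simp [add_top]
  lift a to ℝ≥0 using ha
  lift b to ℝ≥0 using hb
  rw [← ENNReal.coe_rpow_of_nonneg _ (by norm_num : (0:ℝ) ≤ 1/2),
      ← ENNReal.coe_rpow_of_nonneg _ (by norm_num : (0:ℝ) ≤ 1/2),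
      ← ENNReal.coe_mul, ← ENNReal.coe_add,
      show ((2:ℝ≥0∞)) = ((2:ℝ≥0):ℝ≥0∞) by norm_num, ← ENNReal.coe_mul, ENNReal.coe_le_coe,
      ← NNReal.sqrt_eq_rpow, ← NNReal.sqrt_eq_rpow, ← NNReal.coe_le_coe]
  push_cast
  nlinarith [Real.sq_sqrt a.coe_nonneg, Real.sq_sqrt b.coe_nonneg,
    sq_nonneg (Real.sqrt a - Real.sqrt b)]

lemma toReal_rpow_half (a : ℝ≥0∞) : (a ^ (1/2:ℝ)).toReal = Real.sqrt a.toReal := by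
  rw [← ENNReal.toReal_rpow, Real.sqrt_eq_rpow]

lemma meas_halfprod (ν P Q : Measure α) :
    Measurable (fun x => (P.rnDeriv ν x) ^ (1/2:ℝ) * (Q.rnDeriv ν x) ^ (1/2:ℝ)) :=
  ((Measure.measurable_rnDeriv P ν).pow_const _).mul
    ((Measure.measurable_rnDeriv Q ν).pow_const _)

lemma two_mul_BC_le (ν P Q : Measure α) : 2 * BC ν P Q ≤ P Set.univ + Q Set.univ := by
  rw [BC, ← lintegral_const_mul 2 (meas_halfprod ν P Q)]
  refine le_trans (lintegral_mono fun x => amgm _ _) ?_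
  rw [lintegral_add_left (Measure.measurable_rnDeriv P ν)]
  exact add_le_add Measure.lintegral_rnDeriv_le Measure.lintegral_rnDeriv_le

lemma BC_le_one (ν P Q : Measure α) [IsProbabilityMeasure P] [IsProbabilityMeasure Q] :
    BC ν P Q ≤ 1 := by
  have h := two_mul_BC_le ν P Q
  simp only [measure_univ] at h
  rw [show (1:ℝ≥0∞) + 1 = 2 * 1 by norm_num] at h
  exact (ENNReal.mul_le_mul_iff_right (by norm_num) (by norm_num)).mp h

lemma BC_eq_of_ac {ν ν' P Q : Measure α} [SigmaFinite P] [SigmaFinite Q]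
    [SigmaFinite ν] [SigmaFinite ν']
    (hνν' : ν ≪ ν') (hP : P ≪ ν) (hQ : Q ≪ ν) : BC ν' P Q = BC ν P Q := by
  have hP' := Measure.rnDeriv_mul_rnDeriv (κ := ν') hP
  have hQ' := Measure.rnDeriv_mul_rnDeriv (κ := ν') hQ
  unfold BC
  rw [← lintegral_rnDeriv_mul hνν' (meas_halfprod ν P Q).aemeasurable]
  refine lintegral_congr_ae ?_
  filter_upwards [hP', hQ'] with x hPx hQx
  rw [← hPx, ← hQx]
  exact mul_rpow_half _ _ _

lemma BC_self {ν Q : Measure α} [SigmaFinite Q] [SigmaFinite ν] (hQ : Q ≪ ν) :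
    BC ν Q Q = Q Set.univ := by
  unfold BC
  rw [lintegral_congr fun x => half_half _]
  exact Measure.lintegral_rnDeriv hQ

/-- The key formula: the squared-Hellinger-type integral over any base `ν` dominating
`P` and `Q` equals `2 - 2·BC ν P Q`. -/
lemma integral_sq_eq (ν : Measure α) (P Q : Measure α)
    [IsProbabilityMeasure P] [IsProbabilityMeasure Q] [SigmaFinite ν]
    (hP : P ≪ ν) (hQ : Q ≪ ν) :
    ∫ x, (Real.sqrt (P.rnDeriv ν x).toReal - Real.sqrt (Q.rnDeriv ν x).toReal) ^ 2 ∂ν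
      = 2 - 2 * (BC ν P Q).toReal := by
  have hmP := Measure.measurable_rnDeriv P ν
  have hmQ := Measure.measurable_rnDeriv Q ν
  have hmeas : AEStronglyMeasurable
      (fun x => (Real.sqrt (P.rnDeriv ν x).toReal - Real.sqrt (Q.rnDeriv ν x).toReal) ^ 2) ν := by
    apply Measurable.aestronglyMeasurable
    exact ((hmP.ennreal_toReal.sqrt.sub hmQ.ennreal_toReal.sqrt).pow_const 2)
  rw [integral_eq_lintegral_of_nonneg_ae (Filter.Eventually.of_forall fun x => sq_nonneg _) hmeas]
  have hptwise : ∀ᵐ x ∂ν,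
      ENNReal.ofReal ((Real.sqrt (P.rnDeriv ν x).toReal - Real.sqrt (Q.rnDeriv ν x).toReal) ^ 2)
        = (P.rnDeriv ν x + Q.rnDeriv ν x)
          - 2 * ((P.rnDeriv ν x) ^ (1/2:ℝ) * (Q.rnDeriv ν x) ^ (1/2:ℝ)) := by
    filter_upwards [Measure.rnDeriv_lt_top P ν, Measure.rnDeriv_lt_top Q ν] with x hPx hQx
    set a := P.rnDeriv ν x
    set b := Q.rnDeriv ν x
    have ha : 0 ≤ a.toReal := ENNReal.toReal_nonneg
    have hb : 0 ≤ b.toReal := ENNReal.toReal_nonneg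
    have hexp : (Real.sqrt a.toReal - Real.sqrt b.toReal) ^ 2
        = (a.toReal + b.toReal) - 2 * (Real.sqrt a.toReal * Real.sqrt b.toReal) := by
      nlinarith [Real.sq_sqrt ha, Real.sq_sqrt hb]
    rw [hexp, ENNReal.ofReal_sub _ (by positivity), ENNReal.ofReal_add ha hb,
      ENNReal.ofReal_toReal hPx.ne, ENNReal.ofReal_toReal hQx.ne]
    congr 1
    rw [ENNReal.ofReal_mul (by norm_num), ENNReal.ofReal_mul (Real.sqrt_nonneg _)]
    rw [← toReal_rpow_half a, ← toReal_rpow_half b,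
      ENNReal.ofReal_toReal (ENNReal.rpow_ne_top_of_nonneg (by norm_num) hPx.ne),
      ENNReal.ofReal_toReal (ENNReal.rpow_ne_top_of_nonneg (by norm_num) hQx.ne)]
    norm_num
  rw [lintegral_congr_ae hptwise]
  have hfin : 2 * BC ν P Q ≤ 2 := by
    have := two_mul_BC_le ν P Q
    simpa [measure_univ, one_add_one_eq_two] using this
  rw [lintegral_sub (by exact (meas_halfprod ν P Q).const_mul 2)
      (by
        rw [lintegral_const_mul 2 (meas_halfprod ν P Q)]
        exact (hfin.trans_lt (by norm_num)).ne)
      (Filter.Eventually.of_forall fun x => amgm _ _)]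
  rw [lintegral_add_left hmP, Measure.lintegral_rnDeriv hP, Measure.lintegral_rnDeriv hQ,
    lintegral_const_mul 2 (meas_halfprod ν P Q)]
  rw [measure_univ, measure_univ, one_add_one_eq_two]
  show ((2:ℝ≥0∞) - 2 * BC ν P Q).toReal = _
  rw [ENNReal.toReal_sub_of_le hfin (by norm_num)]
  rw [ENNReal.toReal_mul]
  norm_num

lemma sqHellinger_eq_bc (P Q : Measure α) [IsProbabilityMeasure P] [IsProbabilityMeasure Q] :
    sqHellinger P Q = 2 - 2 * (BC (P + Q) P Q).toReal :=
  integral_sq_eq (P + Q) P Q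
    (Measure.absolutelyContinuous_of_le (Measure.le_add_right le_rfl))
    (Measure.absolutelyContinuous_of_le (Measure.le_add_left le_rfl))

lemma sqHellinger_nonneg (P Q : Measure α) : 0 ≤ sqHellinger P Q :=
  integral_nonneg fun x => sq_nonneg _

lemma hellinger_nonneg (P Q : Measure α) : 0 ≤ hellinger P Q := Real.sqrt_nonneg _

lemma sq_hellinger (P Q : Measure α) : (hellinger P Q) ^ 2 = sqHellinger P Q :=
  Real.sq_sqrt (sqHellinger_nonneg P Q)

lemma sqHellinger_symm (P Q : Measure α) : sqHellinger P Q = sqHellinger Q P := by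
  unfold sqHellinger
  rw [add_comm Q P]
  exact integral_congr_ae (Filter.Eventually.of_forall fun x => by ring)

/-! ### L² bridge and the triangle inequality -/

lemma eLpNorm_two_eq (ν : Measure α) (f : α → ℝ) :
    eLpNorm f 2 ν = (∫⁻ x, (‖f x‖₊ : ℝ≥0∞) ^ 2 ∂ν) ^ (1/2 : ℝ) := by
  rw [eLpNorm_eq_lintegral_rpow_enorm_toReal (by norm_num) (by norm_num)]
  have : ∀ x, (‖f x‖₊ : ℝ≥0∞) ^ ((2:ℝ≥0∞)).toReal = (‖f x‖₊ : ℝ≥0∞) ^ 2 := by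
    intro x
    rw [← ENNReal.rpow_natCast (‖f x‖₊ : ℝ≥0∞) 2]
    norm_num
  simp_rw [enorm_eq_nnnorm, this]
  norm_num

lemma sqrt_integral_sq_eq (ν : Measure α) (f : α → ℝ) (hf : AEStronglyMeasurable f ν) :
    Real.sqrt (∫ x, f x ^ 2 ∂ν) = (eLpNorm f 2 ν).toReal := by
  have h2 : AEStronglyMeasurable (fun x => f x ^ 2) ν := by
    exact (hf.mul hf).congr (Filter.Eventually.of_forall fun x => (sq (f x)).symm)
  rw [integral_eq_lintegral_of_nonneg_ae (Filter.Eventually.of_forall fun x => sq_nonneg _) h2]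
  have hpt : ∀ x, ENNReal.ofReal (f x ^ 2) = (‖f x‖₊ : ℝ≥0∞) ^ 2 := by
    intro x
    rw [← sq_abs, ENNReal.ofReal_pow (abs_nonneg _), ← enorm_eq_nnnorm, Real.enorm_eq_ofReal_abs]
  simp_rw [hpt]
  rw [eLpNorm_two_eq, ← ENNReal.toReal_rpow, Real.sqrt_eq_rpow]

lemma eLpNorm_two_ne_top (ν : Measure α) (f : α → ℝ)
    (hf2 : ∫⁻ x, (‖f x‖₊ : ℝ≥0∞) ^ 2 ∂ν ≠ ⊤) : eLpNorm f 2 ν ≠ ⊤ := by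
  rw [eLpNorm_two_eq]
  exact ENNReal.rpow_ne_top_of_nonneg (by norm_num) hf2

lemma sqrt_integral_triangle (ν : Measure α) (u v : α → ℝ)
    (hu : AEStronglyMeasurable u ν) (hv : AEStronglyMeasurable v ν)
    (hu2 : ∫⁻ x, (‖u x‖₊ : ℝ≥0∞) ^ 2 ∂ν ≠ ⊤) (hv2 : ∫⁻ x, (‖v x‖₊ : ℝ≥0∞) ^ 2 ∂ν ≠ ⊤) :
    Real.sqrt (∫ x, (u x + v x) ^ 2 ∂ν)
      ≤ Real.sqrt (∫ x, u x ^ 2 ∂ν) + Real.sqrt (∫ x, v x ^ 2 ∂ν) := by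
  have h1 : Real.sqrt (∫ x, (u x + v x) ^ 2 ∂ν) = (eLpNorm (u + v) 2 ν).toReal := by
    rw [← sqrt_integral_sq_eq ν (u + v) (hu.add hv)]
    simp [Pi.add_apply]
  rw [h1, sqrt_integral_sq_eq ν u hu, sqrt_integral_sq_eq ν v hv]
  have hufin := eLpNorm_two_ne_top ν u hu2
  have hvfin := eLpNorm_two_ne_top ν v hv2
  calc (eLpNorm (u + v) 2 ν).toReal
      ≤ (eLpNorm u 2 ν + eLpNorm v 2 ν).toReal := by
        refine ENNReal.toReal_mono (by simp [ENNReal.add_ne_top, hufin, hvfin]) ?_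
        exact eLpNorm_add_le hu hv (by norm_num)
    _ = (eLpNorm u 2 ν).toReal + (eLpNorm v 2 ν).toReal := ENNReal.toReal_add hufin hvfin

lemma ac_add_of {X Y ν : Measure α} (hX : X ≪ ν) (hY : Y ≪ ν) : X + Y ≪ ν := by
  refine Measure.AbsolutelyContinuous.mk fun s hs h0 => ?_
  rw [Measure.add_apply, hX h0, hY h0, add_zero]

lemma hellinger_eq_nu (ν : Measure α) (X Y : Measure α)
    [IsProbabilityMeasure X] [IsProbabilityMeasure Y] [IsFiniteMeasure ν]
    (hXY : X + Y ≪ ν) :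
    hellinger X Y = Real.sqrt (∫ x,
      (Real.sqrt (X.rnDeriv ν x).toReal - Real.sqrt (Y.rnDeriv ν x).toReal) ^ 2 ∂ν) := by
  have hX : X ≪ ν :=
    (Measure.absolutelyContinuous_of_le (Measure.le_add_right le_rfl)).trans hXY
  have hY : Y ≪ ν :=
    (Measure.absolutelyContinuous_of_le (Measure.le_add_left le_rfl)).trans hXY
  rw [hellinger, sqHellinger_eq_bc, integral_sq_eq ν X Y hX hY,
    BC_eq_of_ac hXY
      (Measure.absolutelyContinuous_of_le (Measure.le_add_right le_rfl))
      (Measure.absolutelyContinuous_of_le (Measure.le_add_left le_rfl))]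

lemma norm_sq_sqrt_sub_le (ν X Y : Measure α) (x : α) :
    (‖Real.sqrt (X.rnDeriv ν x).toReal - Real.sqrt (Y.rnDeriv ν x).toReal‖₊ : ℝ≥0∞) ^ 2
      ≤ X.rnDeriv ν x + Y.rnDeriv ν x := by
  set a := X.rnDeriv ν x
  set b := Y.rnDeriv ν x
  have h1 : (‖Real.sqrt a.toReal - Real.sqrt b.toReal‖₊ : ℝ≥0∞) ^ 2
      = ENNReal.ofReal ((Real.sqrt a.toReal - Real.sqrt b.toReal) ^ 2) := by
    rw [← enorm_eq_nnnorm, Real.enorm_eq_ofReal_abs, ← ENNReal.ofReal_pow (abs_nonneg _), sq_abs]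
  have h2 : (Real.sqrt a.toReal - Real.sqrt b.toReal) ^ 2 ≤ a.toReal + b.toReal := by
    nlinarith [Real.sq_sqrt (ENNReal.toReal_nonneg (a := a)),
      Real.sq_sqrt (ENNReal.toReal_nonneg (a := b)),
      Real.sqrt_nonneg a.toReal, Real.sqrt_nonneg b.toReal]
  rw [h1]
  refine le_trans (ENNReal.ofReal_le_ofReal h2) ?_
  rw [ENNReal.ofReal_add ENNReal.toReal_nonneg ENNReal.toReal_nonneg]
  exact add_le_add ENNReal.ofReal_toReal_le ENNReal.ofReal_toReal_le

lemma lint_norm_sq_ne_top (ν X Y : Measure α) [IsFiniteMeasure X] [IsFiniteMeasure Y] :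
    ∫⁻ x, (‖Real.sqrt (X.rnDeriv ν x).toReal - Real.sqrt (Y.rnDeriv ν x).toReal‖₊ : ℝ≥0∞) ^ 2 ∂ν
      ≠ ⊤ := by
  refine ne_top_of_le_ne_top (b := X Set.univ + Y Set.univ) ?_ ?_
  · exact ENNReal.add_ne_top.mpr ⟨measure_ne_top X _, measure_ne_top Y _⟩
  · refine le_trans (lintegral_mono fun x => norm_sq_sqrt_sub_le ν X Y x) ?_
    rw [lintegral_add_left (Measure.measurable_rnDeriv X ν)]
    exact add_le_add Measure.lintegral_rnDeriv_le Measure.lintegral_rnDeriv_le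

lemma hellinger_triangle (P Q R : Measure α)
    [IsProbabilityMeasure P] [IsProbabilityMeasure Q] [IsProbabilityMeasure R] :
    hellinger P R ≤ hellinger P Q + hellinger Q R := by
  set ν := P + Q + R with hν
  have hPν : P ≪ ν := Measure.absolutelyContinuous_of_le
    ((Measure.le_add_right le_rfl).trans (Measure.le_add_right le_rfl))
  have hQν : Q ≪ ν := Measure.absolutelyContinuous_of_le
    ((Measure.le_add_left le_rfl).trans (Measure.le_add_right le_rfl))
  have hRν : R ≪ ν := Measure.absolutelyContinuous_of_le (Measure.le_add_left le_rfl)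
  rw [hellinger_eq_nu ν P R (ac_add_of hPν hRν), hellinger_eq_nu ν P Q (ac_add_of hPν hQν),
    hellinger_eq_nu ν Q R (ac_add_of hQν hRν)]
  set u := fun x => Real.sqrt (P.rnDeriv ν x).toReal - Real.sqrt (Q.rnDeriv ν x).toReal with hu
  set v := fun x => Real.sqrt (Q.rnDeriv ν x).toReal - Real.sqrt (R.rnDeriv ν x).toReal with hv
  have hum : AEStronglyMeasurable u ν :=
    (((Measure.measurable_rnDeriv P ν).ennreal_toReal.sqrt).sub
      ((Measure.measurable_rnDeriv Q ν).ennreal_toReal.sqrt)).aestronglyMeasurable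
  have hvm : AEStronglyMeasurable v ν :=
    (((Measure.measurable_rnDeriv Q ν).ennreal_toReal.sqrt).sub
      ((Measure.measurable_rnDeriv R ν).ennreal_toReal.sqrt)).aestronglyMeasurable
  have key : Real.sqrt (∫ x,
      (Real.sqrt (P.rnDeriv ν x).toReal - Real.sqrt (R.rnDeriv ν x).toReal) ^ 2 ∂ν)
      = Real.sqrt (∫ x, (u x + v x) ^ 2 ∂ν) := by
    congr 1
    refine integral_congr_ae (Filter.Eventually.of_forall fun x => ?_)
    simp only [hu, hv]
    ring
  rw [key]
  exact sqrt_integral_triangle ν u v hum hvm (lint_norm_sq_ne_top ν P Q)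
    (lint_norm_sq_ne_top ν Q R)

/-! ### Products -/

/-- Radon–Nikodym derivative of a product measure. -/
lemma rnDeriv_prod (P P' : Measure α) (Q Q' : Measure β)
    [IsFiniteMeasure P] [IsFiniteMeasure P'] [IsFiniteMeasure Q] [IsFiniteMeasure Q']
    (hP : P ≪ P') (hQ : Q ≪ Q') :
    (P.prod Q).rnDeriv (P'.prod Q')
      =ᵐ[P'.prod Q'] fun z => P.rnDeriv P' z.1 * Q.rnDeriv Q' z.2 := by
  have hfm : Measurable fun z : α × β => P.rnDeriv P' z.1 * Q.rnDeriv Q' z.2 :=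
    ((Measure.measurable_rnDeriv P P').comp measurable_fst).mul
      ((Measure.measurable_rnDeriv Q Q').comp measurable_snd)
  have key : (P'.prod Q').withDensity (fun z => P.rnDeriv P' z.1 * Q.rnDeriv Q' z.2)
      = P.prod Q := by
    refine (Measure.prod_eq fun s t hs ht => ?_).symm
    rw [withDensity_apply _ (hs.prod ht), ← Measure.prod_restrict,
      lintegral_prod_mul (Measure.measurable_rnDeriv P P').aemeasurable
        (Measure.measurable_rnDeriv Q Q').aemeasurable,
      Measure.setLIntegral_rnDeriv hP s, Measure.setLIntegral_rnDeriv hQ t]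
  exact key ▸ Measure.rnDeriv_withDensity (P'.prod Q') hfm

/-- Multiplicativity of the Bhattacharyya coefficient for product measures. -/
lemma BC_prod (P₁ P₂ : Measure α) (Q₁ Q₂ : Measure β)
    [IsFiniteMeasure P₁] [IsFiniteMeasure P₂] [IsFiniteMeasure Q₁] [IsFiniteMeasure Q₂] :
    BC ((P₁ + P₂).prod (Q₁ + Q₂)) (P₁.prod Q₁) (P₂.prod Q₂)
      = BC (P₁ + P₂) P₁ P₂ * BC (Q₁ + Q₂) Q₁ Q₂ := by
  have acP₁ : P₁ ≪ P₁ + P₂ := Measure.absolutelyContinuous_of_le (Measure.le_add_right le_rfl)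
  have acP₂ : P₂ ≪ P₁ + P₂ := Measure.absolutelyContinuous_of_le (Measure.le_add_left le_rfl)
  have acQ₁ : Q₁ ≪ Q₁ + Q₂ := Measure.absolutelyContinuous_of_le (Measure.le_add_right le_rfl)
  have acQ₂ : Q₂ ≪ Q₁ + Q₂ := Measure.absolutelyContinuous_of_le (Measure.le_add_left le_rfl)
  have h₁ := rnDeriv_prod P₁ (P₁ + P₂) Q₁ (Q₁ + Q₂) acP₁ acQ₁
  have h₂ := rnDeriv_prod P₂ (P₁ + P₂) Q₂ (Q₁ + Q₂) acP₂ acQ₂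
  unfold BC
  have : ∫⁻ z, ((P₁.prod Q₁).rnDeriv ((P₁ + P₂).prod (Q₁ + Q₂)) z) ^ (1/2:ℝ)
        * ((P₂.prod Q₂).rnDeriv ((P₁ + P₂).prod (Q₁ + Q₂)) z) ^ (1/2:ℝ)
          ∂((P₁ + P₂).prod (Q₁ + Q₂))
      = ∫⁻ z, ((P₁.rnDeriv (P₁ + P₂) z.1) ^ (1/2:ℝ) * (P₂.rnDeriv (P₁ + P₂) z.1) ^ (1/2:ℝ))
          * ((Q₁.rnDeriv (Q₁ + Q₂) z.2) ^ (1/2:ℝ) * (Q₂.rnDeriv (Q₁ + Q₂) z.2) ^ (1/2:ℝ))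
          ∂((P₁ + P₂).prod (Q₁ + Q₂)) := by
    refine lintegral_congr_ae ?_
    filter_upwards [h₁, h₂] with z hz₁ hz₂
    rw [hz₁, hz₂, ENNReal.mul_rpow_of_nonneg _ _ (by norm_num : (0:ℝ) ≤ 1/2),
      ENNReal.mul_rpow_of_nonneg _ _ (by norm_num : (0:ℝ) ≤ 1/2)]
    ring
  rw [this, lintegral_prod_mul (meas_halfprod _ P₁ P₂).aemeasurable
    (meas_halfprod _ Q₁ Q₂).aemeasurable]

lemma bc_prod_canonical (P₁ P₂ : Measure α) (Q₁ Q₂ : Measure β)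
    [IsFiniteMeasure P₁] [IsFiniteMeasure P₂] [IsFiniteMeasure Q₁] [IsFiniteMeasure Q₂] :
    BC (P₁.prod Q₁ + P₂.prod Q₂) (P₁.prod Q₁) (P₂.prod Q₂)
      = BC (P₁ + P₂) P₁ P₂ * BC (Q₁ + Q₂) Q₁ Q₂ := by
  rw [← BC_prod]
  have hac : (P₁.prod Q₁ + P₂.prod Q₂) ≪ (P₁ + P₂).prod (Q₁ + Q₂) := by
    refine ac_add_of ?_ ?_
    · exact (Measure.absolutelyContinuous_of_le (Measure.le_add_right le_rfl)).prod
        (Measure.absolutelyContinuous_of_le (Measure.le_add_right le_rfl))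
    · exact (Measure.absolutelyContinuous_of_le (Measure.le_add_left le_rfl)).prod
        (Measure.absolutelyContinuous_of_le (Measure.le_add_left le_rfl))
  exact (BC_eq_of_ac hac
    (Measure.absolutelyContinuous_of_le (Measure.le_add_right le_rfl))
    (Measure.absolutelyContinuous_of_le (Measure.le_add_left le_rfl))).symm

lemma sqHellinger_prod_same (m m' : Measure α) (Qs : Measure β)
    [IsProbabilityMeasure m] [IsProbabilityMeasure m'] [IsProbabilityMeasure Qs] :
    sqHellinger (m.prod Qs) (m'.prod Qs) = sqHellinger m m' := by
  rw [sqHellinger_eq_bc, sqHellinger_eq_bc, bc_prod_canonical,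
    BC_self (Q := Qs) (ν := Qs + Qs)
      (Measure.absolutelyContinuous_of_le (Measure.le_add_right le_rfl)),
    measure_univ, mul_one]

/-! ### Mixtures -/

section Mixtures

variable {ι : Type*} [Fintype ι]

omit [Fintype ι] in
lemma isFiniteMeasure_smul (w : ℝ≥0∞) (hw : w ≠ ⊤) (μ : Measure α) [IsFiniteMeasure μ] :
    IsFiniteMeasure (w • μ) :=
  ⟨by
    rw [Measure.smul_apply, smul_eq_mul, lt_top_iff_ne_top]
    exact ENNReal.mul_ne_top hw (measure_ne_top μ _)⟩

omit [Fintype ι] in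
lemma isFiniteMeasure_finset_sum (s : Finset ι) (μ : ι → Measure α)
    (h : ∀ i ∈ s, IsFiniteMeasure (μ i)) : IsFiniteMeasure (∑ i ∈ s, μ i) := by
  classical
  induction s using Finset.induction_on with
  | empty => simpa using (by infer_instance : IsFiniteMeasure (0 : Measure α))
  | insert a s hi ih =>
    rw [Finset.sum_insert hi]
    have := h a (Finset.mem_insert_self a s)
    have := ih fun i hi' => h i (Finset.mem_insert_of_mem hi')
    infer_instance

lemma isProbabilityMeasure_sum_smul (w : ι → ℝ≥0∞) (hw : ∑ i, w i = 1) (μ : ι → Measure α)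
    [∀ i, IsProbabilityMeasure (μ i)] : IsProbabilityMeasure (∑ i, w i • μ i) :=
  ⟨by simp [Measure.finset_sum_apply, Measure.smul_apply, measure_univ, hw]⟩

lemma ac_sum_smul (w : ι → ℝ≥0∞) (μ : ι → Measure α) {ν : Measure α} (h : ∀ i, μ i ≪ ν) :
    (∑ i, w i • μ i) ≪ ν := by
  refine Measure.AbsolutelyContinuous.mk fun s hs h0 => ?_
  rw [Measure.finset_sum_apply]
  refine Finset.sum_eq_zero fun i _ => ?_
  rw [Measure.smul_apply, h i h0, smul_eq_mul, mul_zero]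

lemma ac_of_mem_sum (μ : ι → Measure α) (i : ι) : μ i ≪ ∑ j, μ j := by
  refine Measure.AbsolutelyContinuous.mk fun s hs h0 => ?_
  rw [Measure.finset_sum_apply] at h0
  exact (Finset.sum_eq_zero_iff.mp h0) i (Finset.mem_univ i)

lemma rnDeriv_sum_smul (w : ι → ℝ≥0∞) (hw : ∀ i, w i ≠ ⊤) (μ : ι → Measure α)
    [∀ i, IsFiniteMeasure (μ i)] (ν : Measure α) [IsFiniteMeasure ν] :
    (∑ i, w i • μ i).rnDeriv ν =ᵐ[ν] fun x => ∑ i, w i * (μ i).rnDeriv ν x := by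
  classical
  have key : ∀ s : Finset ι,
      (∑ i ∈ s, w i • μ i).rnDeriv ν =ᵐ[ν] fun x => ∑ i ∈ s, w i * (μ i).rnDeriv ν x := by
    intro s
    induction s using Finset.induction_on with
    | empty =>
      simp only [Finset.sum_empty]
      filter_upwards [Measure.rnDeriv_zero ν] with x hx
      simp [hx]
    | insert a s hi ih =>
      haveI := isFiniteMeasure_smul (w a) (hw a) (μ a)
      haveI := isFiniteMeasure_finset_sum s (fun i => w i • μ i)
        (fun i _ => isFiniteMeasure_smul (w i) (hw i) (μ i))
      rw [Finset.sum_insert hi]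
      have h1 := Measure.rnDeriv_add (w a • μ a) (∑ i ∈ s, w i • μ i) ν
      have h2 := Measure.rnDeriv_smul_left_of_ne_top (μ a) ν (hw a)
      filter_upwards [h1, h2, ih] with x hx1 hx2 hx3
      rw [hx1, Pi.add_apply, hx2]
      simp only [Pi.smul_apply, smul_eq_mul]
      rw [hx3, Finset.sum_insert hi]
  exact key Finset.univ

omit [Fintype ι] in
/-- Cauchy–Schwarz for finite sums in `ℝ≥0∞`. -/
lemma cs_sum (s : Finset ι) (a b : ι → ℝ≥0∞) (ha : ∀ i ∈ s, a i ≠ ⊤) (hb : ∀ i ∈ s, b i ≠ ⊤) :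
    ∑ i ∈ s, (a i) ^ (1/2:ℝ) * (b i) ^ (1/2:ℝ)
      ≤ (∑ i ∈ s, a i) ^ (1/2:ℝ) * (∑ i ∈ s, b i) ^ (1/2:ℝ) := by
  classical
  have hA : ∑ i ∈ s, a i = ((∑ i ∈ s, (a i).toNNReal : ℝ≥0) : ℝ≥0∞) := by
    rw [ENNReal.coe_finset_sum]
    exact Finset.sum_congr rfl fun i hi => (ENNReal.coe_toNNReal (ha i hi)).symm
  have hB : ∑ i ∈ s, b i = ((∑ i ∈ s, (b i).toNNReal : ℝ≥0) : ℝ≥0∞) := by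
    rw [ENNReal.coe_finset_sum]
    exact Finset.sum_congr rfl fun i hi => (ENNReal.coe_toNNReal (hb i hi)).symm
  have hterm : ∀ i ∈ s, (a i) ^ (1/2:ℝ) * (b i) ^ (1/2:ℝ)
      = ((NNReal.sqrt (a i).toNNReal * NNReal.sqrt (b i).toNNReal : ℝ≥0) : ℝ≥0∞) := by
    intro i hi
    conv_lhs => rw [← ENNReal.coe_toNNReal (ha i hi), ← ENNReal.coe_toNNReal (hb i hi)]
    rw [← ENNReal.coe_rpow_of_nonneg _ (by norm_num : (0:ℝ) ≤ 1/2),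
      ← ENNReal.coe_rpow_of_nonneg _ (by norm_num : (0:ℝ) ≤ 1/2),
      ← ENNReal.coe_mul, ← NNReal.sqrt_eq_rpow, ← NNReal.sqrt_eq_rpow]
  rw [Finset.sum_congr rfl hterm, ← ENNReal.coe_finset_sum, hA, hB,
    ← ENNReal.coe_rpow_of_nonneg _ (by norm_num : (0:ℝ) ≤ 1/2),
    ← ENNReal.coe_rpow_of_nonneg _ (by norm_num : (0:ℝ) ≤ 1/2),
    ← ENNReal.coe_mul, ENNReal.coe_le_coe, ← NNReal.sqrt_eq_rpow, ← NNReal.sqrt_eq_rpow]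
  exact NNReal.sum_sqrt_mul_sqrt_le s _ _

omit [Fintype ι] in
lemma smul_rpow_half (w a b : ℝ≥0∞) :
    (w * a) ^ (1/2:ℝ) * (w * b) ^ (1/2:ℝ) = w * (a ^ (1/2:ℝ) * b ^ (1/2:ℝ)) := by
  rw [ENNReal.mul_rpow_of_nonneg _ _ (by norm_num : (0:ℝ) ≤ 1/2),
    ENNReal.mul_rpow_of_nonneg _ _ (by norm_num : (0:ℝ) ≤ 1/2), mul_mul_mul_comm,
    ← ENNReal.rpow_add_of_nonneg _ _ (by norm_num) (by norm_num)]
  norm_num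

/-- Joint superadditivity of `BC` over mixtures. -/
lemma sum_le_BC_mix (w : ι → ℝ≥0∞) (hw : ∀ i, w i ≠ ⊤) (μ ξ : ι → Measure α)
    [∀ i, IsFiniteMeasure (μ i)] [∀ i, IsFiniteMeasure (ξ i)]
    (ν : Measure α) [IsFiniteMeasure ν] :
    ∑ i, w i * BC ν (μ i) (ξ i) ≤ BC ν (∑ i, w i • μ i) (∑ i, w i • ξ i) := by
  classical
  have h1 := rnDeriv_sum_smul w hw μ ν
  have h2 := rnDeriv_sum_smul w hw ξ ν
  unfold BC
  rw [show ∑ i, w i * ∫⁻ x, ((μ i).rnDeriv ν x) ^ (1/2:ℝ) * ((ξ i).rnDeriv ν x) ^ (1/2:ℝ) ∂ν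
      = ∫⁻ x, ∑ i, w i * (((μ i).rnDeriv ν x) ^ (1/2:ℝ) * ((ξ i).rnDeriv ν x) ^ (1/2:ℝ)) ∂ν by
    rw [lintegral_finset_sum]
    · exact Finset.sum_congr rfl fun i _ => (lintegral_const_mul _ (meas_halfprod ν _ _)).symm
    · exact fun i _ => (meas_halfprod ν _ _).const_mul _]
  refine lintegral_mono_ae ?_
  have hfin : ∀ᵐ x ∂ν, ∀ i, (μ i).rnDeriv ν x < ⊤ ∧ (ξ i).rnDeriv ν x < ⊤ := by
    rw [ae_all_iff]
    exact fun i => (Measure.rnDeriv_lt_top (μ i) ν).and (Measure.rnDeriv_lt_top (ξ i) ν)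
  filter_upwards [h1, h2, hfin] with x hx1 hx2 hxf
  rw [hx1, hx2]
  calc ∑ i, w i * (((μ i).rnDeriv ν x) ^ (1/2:ℝ) * ((ξ i).rnDeriv ν x) ^ (1/2:ℝ))
      = ∑ i, (w i * (μ i).rnDeriv ν x) ^ (1/2:ℝ) * (w i * (ξ i).rnDeriv ν x) ^ (1/2:ℝ) :=
        Finset.sum_congr rfl fun i _ => (smul_rpow_half _ _ _).symm
    _ ≤ (∑ i, w i * (μ i).rnDeriv ν x) ^ (1/2:ℝ) * (∑ i, w i * (ξ i).rnDeriv ν x) ^ (1/2:ℝ) := by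
        refine cs_sum _ _ _ (fun i _ => ?_) (fun i _ => ?_)
        · exact ENNReal.mul_ne_top (hw i) (hxf i).1.ne
        · exact ENNReal.mul_ne_top (hw i) (hxf i).2.ne

/-- A mixture tensorized with a fixed measure. -/
lemma sum_smul_prod (w : ι → ℝ≥0∞) (hw : ∀ i, w i ≠ ⊤) (P : ι → Measure α)
    [∀ i, IsFiniteMeasure (P i)] (ν : Measure β) [IsFiniteMeasure ν] :
    (∑ i, w i • P i).prod ν = ∑ i, w i • (P i).prod ν := by
  haveI := isFiniteMeasure_finset_sum Finset.univ (fun i => w i • P i)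
    (fun i _ => isFiniteMeasure_smul (w i) (hw i) (P i))
  refine Measure.prod_eq fun s t hs ht => ?_
  simp only [Measure.finset_sum_apply, Measure.smul_apply, Measure.prod_prod, smul_eq_mul,
    Finset.sum_mul, mul_assoc]

/-- The key mixture bound: if `H²(Q_i, R_i) ≤ τ²` for all `i`, then the Hellinger distance
between the two mixtures of products is at most `τ`. -/
lemma hellinger_mix_prod_le (w : ι → ℝ≥0∞) (hw : ∑ i, w i = 1)
    (P : ι → Measure α) (Q R : ι → Measure β)
    [∀ i, IsProbabilityMeasure (P i)] [∀ i, IsProbabilityMeasure (Q i)]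
    [∀ i, IsProbabilityMeasure (R i)]
    (τ : ℝ) (hτ0 : 0 ≤ τ) (hτ : ∀ i, sqHellinger (Q i) (R i) ≤ τ ^ 2) :
    hellinger (∑ i, w i • (P i).prod (Q i)) (∑ i, w i • (P i).prod (R i)) ≤ τ := by
  classical
  set M := fun i => (P i).prod (Q i) with hM
  set N := fun i => (P i).prod (R i) with hN
  have hw' : ∀ i, w i ≠ ⊤ := by
    intro i
    refine ne_top_of_le_ne_top (by norm_num : (1:ℝ≥0∞) ≠ ⊤) ?_
    rw [← hw]
    exact Finset.single_le_sum (fun j _ => zero_le) (Finset.mem_univ i)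
  haveI : ∀ i, IsProbabilityMeasure (M i) := fun i => by rw [hM]; infer_instance
  haveI : ∀ i, IsProbabilityMeasure (N i) := fun i => by rw [hN]; infer_instance
  haveI hA : IsProbabilityMeasure (∑ i, w i • M i) := isProbabilityMeasure_sum_smul w hw M
  haveI hB : IsProbabilityMeasure (∑ i, w i • N i) := isProbabilityMeasure_sum_smul w hw N
  set ν := ∑ i, (M i + N i) with hνdef
  haveI : IsFiniteMeasure ν :=
    isFiniteMeasure_finset_sum Finset.univ (fun i => M i + N i) (fun i _ => by infer_instance)
  have hMν : ∀ i, M i ≪ ν := fun i =>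
    (Measure.absolutelyContinuous_of_le (Measure.le_add_right le_rfl)).trans
      (ac_of_mem_sum (fun j => M j + N j) i)
  have hNν : ∀ i, N i ≪ ν := fun i =>
    (Measure.absolutelyContinuous_of_le (Measure.le_add_left le_rfl)).trans
      (ac_of_mem_sum (fun j => M j + N j) i)
  have hAν : (∑ i, w i • M i) ≪ ν := ac_sum_smul w M hMν
  have hBν : (∑ i, w i • N i) ≪ ν := ac_sum_smul w N hNν
  set bcAB := BC ((∑ i, w i • M i) + ∑ i, w i • N i) (∑ i, w i • M i) (∑ i, w i • N i)
    with hbcAB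
  have hbc : bcAB = BC ν (∑ i, w i • M i) (∑ i, w i • N i) :=
    (BC_eq_of_ac (ac_add_of hAν hBν)
      (Measure.absolutelyContinuous_of_le (Measure.le_add_right le_rfl))
      (Measure.absolutelyContinuous_of_le (Measure.le_add_left le_rfl))).symm
  have hcomp : ∀ i, BC ν (M i) (N i) = BC (Q i + R i) (Q i) (R i) := by
    intro i
    have h1 : BC ν (M i) (N i) = BC (M i + N i) (M i) (N i) :=
      BC_eq_of_ac (ac_of_mem_sum (fun j => M j + N j) i)
        (Measure.absolutelyContinuous_of_le (Measure.le_add_right le_rfl))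
        (Measure.absolutelyContinuous_of_le (Measure.le_add_left le_rfl))
    rw [h1, hM, hN, bc_prod_canonical,
      BC_self (Q := P i) (ν := P i + P i)
        (Measure.absolutelyContinuous_of_le (Measure.le_add_right le_rfl)),
      measure_univ, one_mul]
  have hlow : ∑ i, w i * BC (Q i + R i) (Q i) (R i) ≤ bcAB := by
    rw [hbc]
    refine le_trans (le_of_eq ?_) (sum_le_BC_mix w hw' M N ν)
    exact Finset.sum_congr rfl fun i _ => by rw [hcomp i]
  -- real arithmetic
  have hone : bcAB ≤ 1 := BC_le_one _ _ _
  have hbci_le : ∀ i, BC (Q i + R i) (Q i) (R i) ≤ 1 := fun i => BC_le_one _ _ _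
  set p := fun i => (w i).toReal with hp
  set r := fun i => (BC (Q i + R i) (Q i) (R i)).toReal with hr
  have hp1 : ∑ i, p i = 1 := by
    rw [hp]
    rw [← ENNReal.toReal_sum (fun i _ => hw' i), hw, ENNReal.toReal_one]
  have hSto : (∑ i, w i * BC (Q i + R i) (Q i) (R i)).toReal = ∑ i, p i * r i := by
    rw [ENNReal.toReal_sum (fun i _ => ENNReal.mul_ne_top (hw' i)
      (ne_top_of_le_ne_top (by norm_num) (hbci_le i)))]
    exact Finset.sum_congr rfl fun i _ => ENNReal.toReal_mul
  have hmono : ∑ i, p i * r i ≤ bcAB.toReal := by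
    rw [← hSto]
    exact ENNReal.toReal_mono (ne_top_of_le_ne_top (by norm_num) hone) hlow
  have hsq : sqHellinger (∑ i, w i • M i) (∑ i, w i • N i) ≤ τ ^ 2 := by
    rw [sqHellinger_eq_bc, ← hbcAB]
    have hri : ∀ i, 2 - 2 * r i ≤ τ ^ 2 := by
      intro i
      have := hτ i
      rw [sqHellinger_eq_bc] at this
      exact this
    have hpnn : ∀ i, 0 ≤ p i := fun i => ENNReal.toReal_nonneg
    have e1 : ∑ i, p i * (2 - 2 * r i) = 2 * (∑ i, p i) - 2 * (∑ i, p i * r i) := by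
      rw [Finset.mul_sum, Finset.mul_sum, ← Finset.sum_sub_distrib]
      exact Finset.sum_congr rfl fun i _ => by ring
    have e2 : ∑ i, p i * (2 - 2 * r i) ≤ ∑ i, p i * τ ^ 2 :=
      Finset.sum_le_sum fun i _ => mul_le_mul_of_nonneg_left (hri i) (hpnn i)
    rw [← Finset.sum_mul, hp1, one_mul] at e2
    rw [e1, hp1] at e2
    linarith
  rw [hellinger]
  calc Real.sqrt (sqHellinger (∑ i, w i • M i) (∑ i, w i • N i))
      ≤ Real.sqrt (τ ^ 2) := Real.sqrt_le_sqrt hsq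
    _ = τ := Real.sqrt_sq hτ0

end Mixtures

end HellingerAux

open HellingerAux in
/-- If `H(Q*, Q_θ) ≤ τ` for all `θ`, then for any priors `π`, `π'` on a
finite set `Θ`,
`H(E_{θ∼π}[P_θ ⊗ Q_θ], E_{θ∼π'}[P_θ ⊗ Q_θ]) ≤ H(E_{θ∼π} P_θ, E_{θ∼π'} P_θ) + 2τ`. -/
theorem hellinger_mixture_product_bound
    {Θ : Type*} [Fintype Θ] {α β : Type*} [MeasurableSpace α] [MeasurableSpace β]
    (P : Θ → Measure α) (Q : Θ → Measure β) (Qs : Measure β)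
    [∀ θ, IsProbabilityMeasure (P θ)] [∀ θ, IsProbabilityMeasure (Q θ)]
    [IsProbabilityMeasure Qs]
    (τ : ℝ) (hτ : ∀ θ, hellinger Qs (Q θ) ≤ τ)
    (π π' : Θ → ℝ≥0∞) (hπ : ∑ θ, π θ = 1) (hπ' : ∑ θ, π' θ = 1) :
    hellinger (∑ θ, π θ • (P θ).prod (Q θ)) (∑ θ, π' θ • (P θ).prod (Q θ))
      ≤ hellinger (∑ θ, π θ • P θ) (∑ θ, π' θ • P θ) + 2 * τ := by
  classical
  -- τ is nonnegative
  have hΘ : Nonempty Θ := by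
    by_contra h
    rw [not_nonempty_iff] at h
    rw [Finset.univ_eq_empty, Finset.sum_empty] at hπ
    exact one_ne_zero hπ.symm
  have hτ0 : 0 ≤ τ := le_trans (hellinger_nonneg _ _) (hτ hΘ.some)
  have hπtop : ∀ θ, π θ ≠ ⊤ := by
    intro θ
    refine ne_top_of_le_ne_top (by norm_num : (1:ℝ≥0∞) ≠ ⊤) ?_
    rw [← hπ]
    exact Finset.single_le_sum (fun j _ => zero_le) (Finset.mem_univ θ)
  have hπ'top : ∀ θ, π' θ ≠ ⊤ := by
    intro θ
    refine ne_top_of_le_ne_top (by norm_num : (1:ℝ≥0∞) ≠ ⊤) ?_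
    rw [← hπ']
    exact Finset.single_le_sum (fun j _ => zero_le) (Finset.mem_univ θ)
  -- the four mixtures
  set A := ∑ θ, π θ • (P θ).prod (Q θ) with hA
  set A' := ∑ θ, π' θ • (P θ).prod (Q θ) with hA'
  set B := ∑ θ, π θ • (P θ).prod Qs with hB
  set B' := ∑ θ, π' θ • (P θ).prod Qs with hB'
  haveI : IsProbabilityMeasure A := isProbabilityMeasure_sum_smul π hπ _
  haveI : IsProbabilityMeasure A' := isProbabilityMeasure_sum_smul π' hπ' _
  haveI : IsProbabilityMeasure B := isProbabilityMeasure_sum_smul π hπ _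
  haveI : IsProbabilityMeasure B' := isProbabilityMeasure_sum_smul π' hπ' _
  haveI : IsProbabilityMeasure (∑ θ, π θ • P θ) := isProbabilityMeasure_sum_smul π hπ _
  haveI : IsProbabilityMeasure (∑ θ, π' θ • P θ) := isProbabilityMeasure_sum_smul π' hπ' _
  -- squared Hellinger bounds for components
  have hτsq1 : ∀ θ, sqHellinger (Q θ) ((fun _ => Qs) θ) ≤ τ ^ 2 := by
    intro θ
    rw [sqHellinger_symm]
    calc sqHellinger Qs (Q θ) = (hellinger Qs (Q θ)) ^ 2 := (sq_hellinger _ _).symm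
      _ ≤ τ ^ 2 := pow_le_pow_left₀ (hellinger_nonneg _ _) (hτ θ) 2
  have hτsq2 : ∀ θ, sqHellinger ((fun _ => Qs) θ) (Q θ) ≤ τ ^ 2 := by
    intro θ
    calc sqHellinger Qs (Q θ) = (hellinger Qs (Q θ)) ^ 2 := (sq_hellinger _ _).symm
      _ ≤ τ ^ 2 := pow_le_pow_left₀ (hellinger_nonneg _ _) (hτ θ) 2
  -- key bounds
  have step1 : hellinger A B ≤ τ := by
    have := hellinger_mix_prod_le π hπ P Q (fun _ => Qs) τ hτ0 hτsq1
    simpa [hA, hB] using this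
  have step3 : hellinger B' A' ≤ τ := by
    have := hellinger_mix_prod_le π' hπ' P (fun _ => Qs) Q τ hτ0 hτsq2
    simpa [hA', hB'] using this
  have step2 : hellinger B B' = hellinger (∑ θ, π θ • P θ) (∑ θ, π' θ • P θ) := by
    have hBeq : B = (∑ θ, π θ • P θ).prod Qs := by
      rw [hB, sum_smul_prod π hπtop P Qs]
    have hB'eq : B' = (∑ θ, π' θ • P θ).prod Qs := by
      rw [hB', sum_smul_prod π' hπ'top P Qs]
    rw [hBeq, hB'eq, hellinger, hellinger, sqHellinger_prod_same]
  -- triangle inequality twice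
  have tri1 : hellinger A A' ≤ hellinger A B + hellinger B A' := hellinger_triangle A B A'
  have tri2 : hellinger B A' ≤ hellinger B B' + hellinger B' A' := hellinger_triangle B B' A'
  linarith [step1, step3, tri1, tri2, step2.le, step2.ge]
end
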